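/- arXiv:1706.07641 — 7 statements merged into one kernel-verified Lean document; each statement's English description precedes it below -/
import Mathlib

section
/- Let F be a field, n ≥ 4, and let g₁, g₂ ∈ GLₙ(F) each have minimal polynomial of degree 2. Then the subgroup ⟨g₁, g₂⟩ does not act absolutely irreducibly on Fⁿ; equivalently, the F-subalgebra of Mₙ(F) generated by g₁ and g₂ is a proper subalgebra of Mₙ(F). -/
open Polynomial Submodule

/-- An element whose minimal polynomial has degree 2 satisfies an explicit
quadratic relation. -/
lemma quad_rel {F S : Type*} [Field F] [Ring S] [Nontrivial S] [Algebra F S]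
    (a : S) (hint : IsIntegral F a) (h : (minpoly F a).natDegree = 2) :
    a * a = (-(minpoly F a).coeff 1) • a + (-(minpoly F a).coeff 0) • 1 := by
  have h0 := minpoly.aeval F a
  rw [aeval_eq_sum_range, h] at h0
  have hmon := (minpoly.monic hint).coeff_natDegree
  rw [h] at hmon
  simp only [Finset.sum_range_succ, Finset.sum_range_zero, zero_add, hmon, one_smul,
    pow_zero, pow_one] at h0
  rw [sq] at h0
  rw [← sub_eq_zero, show a * a - ((-(minpoly F a).coeff 1) • a + (-(minpoly F a).coeff 0) • 1)
      = (minpoly F a).coeff 0 • 1 + (minpoly F a).coeff 1 • a + a * a from by module]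
  exact h0

/-- If `a` satisfies a quadratic relation, then `a` commutes with
`a*b + b*a - μ•b - ν•a`. -/
lemma quad_central {F S : Type*} [Field F] [Ring S] [Algebra F S]
    (a b : S) (μ β ν : F) (ha : a * a = μ • a + β • 1) :
    a * (a*b + b*a - μ•b - ν•a) = (a*b + b*a - μ•b - ν•a) * a := by
  simp only [mul_add, add_mul, mul_sub, sub_mul, mul_assoc, ha, mul_smul_comm,
    smul_mul_assoc, mul_add, mul_one, one_mul, smul_add, smul_smul]
  rw [← mul_assoc a a b, ha]
  simp only [add_mul, smul_mul_assoc, one_mul]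
  abel

/-- If two invertible `n×n` matrices (`n ≥ 4`) over a field both have minimal
polynomial of degree 2, the subalgebra they generate is proper, i.e. the group
they generate is not absolutely irreducible. -/
theorem stmt_2 {F : Type*} [Field F] {n : ℕ} (hn : 4 ≤ n)
    (A B : Matrix (Fin n) (Fin n) F) (hA : IsUnit A) (hB : IsUnit B)
    (h₁ : (minpoly F A).natDegree = 2) (h₂ : (minpoly F B).natDegree = 2) :
    Algebra.adjoin F {A, B} ≠ ⊤ := by
  intro htop
  classical
  have hne : Nonempty (Fin n) := ⟨⟨0, by omega⟩⟩
  set μ : F := -(minpoly F A).coeff 1 with hμdef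
  set β : F := -(minpoly F A).coeff 0 with hβdef
  set ν : F := -(minpoly F B).coeff 1 with hνdef
  set δ : F := -(minpoly F B).coeff 0 with hδdef
  have hintA : IsIntegral F A := Algebra.IsIntegral.isIntegral A
  have hintB : IsIntegral F B := Algebra.IsIntegral.isIntegral B
  have hA2 : A * A = μ • A + β • 1 := quad_rel A hintA h₁
  have hB2 : B * B = ν • B + δ • 1 := quad_rel B hintB h₂
  set z : Matrix (Fin n) (Fin n) F := A*B + B*A - μ•B - ν•A with hz
  have hzA : A * z = z * A := quad_central A B μ β ν hA2
  have hzB : B * z = z * B := by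
    have h' : z = B*A + A*B - ν•A - μ•B := by rw [hz]; abel
    rw [h']; exact quad_central B A ν δ μ hB2
  -- z commutes with every matrix
  have hcomm : ∀ m : Matrix (Fin n) (Fin n) F, Commute m z := by
    intro m
    have hm : m ∈ Algebra.adjoin F ({A, B} : Set (Matrix (Fin n) (Fin n) F)) :=
      htop ▸ Algebra.mem_top
    induction hm using Algebra.adjoin_induction with
    | mem x hx =>
      rcases hx with rfl | rfl
      · exact hzA
      · exact hzB
    | algebraMap r => exact Algebra.commutes r z
    | add x y _ _ hx hy => exact hx.add_left hy
    | mul x y _ _ hx hy => exact hx.mul_left hy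
  -- hence z is a scalar matrix
  obtain ⟨c, hc⟩ := Matrix.mem_range_scalar_of_commute_single
    (M := z) (fun i j _ => hcomm _)
  have hzc : A*B + B*A - μ•B - ν•A = c • (1 : Matrix (Fin n) (Fin n) F) := by
    rw [← hz, ← hc]
    ext i j
    simp [Matrix.scalar_apply, Matrix.one_apply, Matrix.diagonal_apply, Matrix.smul_apply]
  have hBA : B * A = c • (1 : Matrix (Fin n) (Fin n) F) + μ • B + ν • A - A * B := by
    rw [← sub_eq_zero, show B * A - (c • (1 : Matrix (Fin n) (Fin n) F) + μ • B + ν • A - A * B)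
        = (A*B + B*A - μ•B - ν•A) - c • (1 : Matrix (Fin n) (Fin n) F) from by module,
      hzc, sub_self]
  -- the span of {1, A, B, A*B}
  set s : Set (Matrix (Fin n) (Fin n) F) := {1, A, B, A*B} with hs
  have m1 : (1 : Matrix (Fin n) (Fin n) F) ∈ span F s := subset_span (by simp [hs])
  have mA : A ∈ span F s := subset_span (by simp [hs])
  have mB : B ∈ span F s := subset_span (by simp [hs])
  have mAB : A*B ∈ span F s := subset_span (by simp [hs])
  have hAmul : ∀ w ∈ span F s, A * w ∈ span F s := by
    intro w hw
    induction hw using span_induction with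
    | mem x hx =>
      rcases hx with rfl | rfl | rfl | rfl
      · rw [mul_one]; exact mA
      · rw [hA2]; exact add_mem (smul_mem _ _ mA) (smul_mem _ _ m1)
      · exact mAB
      · rw [← mul_assoc, hA2, add_mul, smul_mul_assoc, smul_mul_assoc, one_mul]
        exact add_mem (smul_mem _ _ mAB) (smul_mem _ _ mB)
    | zero => rw [mul_zero]; exact zero_mem _
    | add x y _ _ hx hy => rw [mul_add]; exact add_mem hx hy
    | smul t x _ hx => rw [mul_smul_comm]; exact smul_mem _ _ hx
  have hBmul : ∀ w ∈ span F s, B * w ∈ span F s := by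
    intro w hw
    induction hw using span_induction with
    | mem x hx =>
      rcases hx with rfl | rfl | rfl | rfl
      · rw [mul_one]; exact mB
      · rw [hBA]
        exact sub_mem (add_mem (add_mem (smul_mem _ _ m1) (smul_mem _ _ mB))
          (smul_mem _ _ mA)) mAB
      · rw [hB2]; exact add_mem (smul_mem _ _ mB) (smul_mem _ _ m1)
      · rw [← mul_assoc, hBA, sub_mul, add_mul, add_mul, smul_mul_assoc, smul_mul_assoc,
          smul_mul_assoc, one_mul, mul_assoc, hB2, mul_add, mul_smul_comm, mul_smul_comm,
          mul_one]
        refine sub_mem (add_mem (add_mem (smul_mem _ _ mB) (smul_mem _ _ ?_))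
          (smul_mem _ _ mAB)) (add_mem (smul_mem _ _ mAB) (smul_mem _ _ mA))
        exact add_mem (smul_mem _ _ mB) (smul_mem _ _ m1)
    | zero => rw [mul_zero]; exact zero_mem _
    | add x y _ _ hx hy => rw [mul_add]; exact add_mem hx hy
    | smul t x _ hx => rw [mul_smul_comm]; exact smul_mem _ _ hx
  have hclosed : ∀ x y : Matrix (Fin n) (Fin n) F,
      x ∈ span F s → y ∈ span F s → x * y ∈ span F s := by
    intro x y hx hy
    induction hx using span_induction with
    | mem u hu =>
      rcases hu with rfl | rfl | rfl | rfl
      · rw [one_mul]; exact hy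
      · exact hAmul y hy
      · exact hBmul y hy
      · rw [mul_assoc]; exact hAmul _ (hBmul y hy)
    | zero => rw [zero_mul]; exact zero_mem _
    | add u v _ _ hu hv => rw [add_mul]; exact add_mem hu hv
    | smul t u _ hu => rw [smul_mul_assoc]; exact smul_mem _ _ hu
  -- conclude : everything lies in the span
  have hle : Algebra.adjoin F ({A, B} : Set (Matrix (Fin n) (Fin n) F)) ≤
      (span F s).toSubalgebra m1 hclosed :=
    Algebra.adjoin_le (by rintro x (rfl | rfl) <;> [exact mA; exact mB])
  have hspan_top : span F s = ⊤ := by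
    rw [eq_top_iff]
    intro x _
    exact hle (htop ▸ Algebra.mem_top)
  have hfr : Module.finrank F (Matrix (Fin n) (Fin n) F) = n * n := by
    rw [Module.finrank_matrix]
    simp
  have hrange : Set.range ![1, A, B, A*B] = s := by
    rw [hs]
    ext x
    simp only [Matrix.range_cons, Matrix.range_empty, Set.singleton_union, Set.union_empty,
      Set.mem_insert_iff, Set.mem_singleton_iff]
  have hle4 : Module.finrank F (Matrix (Fin n) (Fin n) F) ≤ 4 := by
    refine finrank_le_of_span_eq_top (v := ![1, A, B, A*B]) ?_
    rw [hrange]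
    exact hspan_top
  have h16 : 16 ≤ n * n := Nat.mul_le_mul hn hn
  omega
end

section
/- Let F be a field, n ≥ 4, and let g₁, g₂ ∈ GLₙ(F) each have minimal polynomial of degree 2. Then the set S = {1, g₁, g₂} ∪ {(g₁g₂)^m, (g₁g₂)^m g₁, (g₂g₁)^m, (g₂g₁)^m g₂ : 1 ≤ m ≤ n−1} spans the F-subalgebra of Mₙ(F) generated by g₁ and g₂. -/
open Polynomial

theorem aux_pow_mem {F R : Type*} [Field F] [Ring R] [Algebra F R]
    (W : Submodule F R) (M N : R) (p : F[X]) (hm : p.Monic)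
    (h0 : Polynomial.aeval M p = 0) (hd : 0 < p.natDegree)
    (h : ∀ i < p.natDegree, M ^ i * N ∈ W) : M ^ p.natDegree * N ∈ W := by
  set d := p.natDegree with hdd
  set q : F[X] := X ^ d - p with hq
  have hqd : q.natDegree < d := by
    rcases eq_or_ne q 0 with h0q | h0q
    · simpa [h0q] using hd
    · rw [Polynomial.natDegree_lt_iff_degree_lt h0q]
      have := Polynomial.degree_sub_lt (p := (X : F[X]) ^ d) (q := p)
        (by rw [Polynomial.degree_X_pow, Polynomial.degree_eq_natDegree hm.ne_zero])
        (pow_ne_zero _ Polynomial.X_ne_zero)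
        (by rw [Polynomial.leadingCoeff_X_pow]; exact hm.leadingCoeff.symm)
      rw [Polynomial.degree_X_pow] at this
      exact_mod_cast this
  have hMd : M ^ d * N = Polynomial.aeval M q * N := by
    rw [hq, map_sub, map_pow, Polynomial.aeval_X, h0, sub_zero]
  rw [hMd, Polynomial.aeval_eq_sum_range' hqd, Finset.sum_mul]
  refine Submodule.sum_mem _ fun i hi => ?_
  rw [smul_mul_assoc]
  exact W.smul_mem _ (h i (Finset.mem_range.mp hi))

/-- A matrix with minimal polynomial of degree 2 has `M*M` in the span of `1, M`. -/
theorem sq_decomp {F : Type*} [Field F] {n : ℕ} [NeZero n] (M : Matrix (Fin n) (Fin n) F)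
    (h : (minpoly F M).natDegree = 2) :
    ∃ a₁ a₀ : F, M * M = a₁ • M + a₀ • (1 : Matrix (Fin n) (Fin n) F) := by
  have hI : IsIntegral F M := .of_finite F M
  have key := aux_pow_mem (Submodule.span F {(1 : Matrix (Fin n) (Fin n) F), M}) M 1
    (minpoly F M) (minpoly.monic hI) (minpoly.aeval F M) (by omega)
    (by
      intro i hi
      rw [h] at hi
      interval_cases i
      · rw [pow_zero, one_mul]
        exact Submodule.subset_span (Set.mem_insert _ _)
      · rw [pow_one, mul_one]
        exact Submodule.subset_span (Set.mem_insert_of_mem _ rfl))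
  rw [h, mul_one, pow_two] at key
  rw [Submodule.mem_span_pair] at key
  obtain ⟨a, b, hab⟩ := key
  exact ⟨b, a, by rw [← hab]; exact add_comm _ _⟩

/-- If two invertible `n×n` matrices (`n ≥ 4`) over a field both have minimal
polynomial of degree 2, then the set
`{1, A, B} ∪ {(AB)^m, (AB)^m A, (BA)^m, (BA)^m B : 1 ≤ m ≤ n−1}`
spans the subalgebra generated by `A` and `B`. -/
theorem stmt_3 {F : Type*} [Field F] {n : ℕ} (hn : 4 ≤ n)
    (A B : Matrix (Fin n) (Fin n) F) (hA : IsUnit A) (hB : IsUnit B)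
    (h₁ : (minpoly F A).natDegree = 2) (h₂ : (minpoly F B).natDegree = 2) :
    Submodule.span F (({1, A, B} : Set (Matrix (Fin n) (Fin n) F)) ∪
        ⋃ m ∈ Set.Icc 1 (n - 1),
          {(A * B) ^ m, (A * B) ^ m * A, (B * A) ^ m, (B * A) ^ m * B}) =
      Subalgebra.toSubmodule (Algebra.adjoin F {A, B}) := by
  have hn0 : NeZero n := ⟨by omega⟩
  obtain ⟨a₁, a₀, hAA⟩ := sq_decomp A h₁
  obtain ⟨b₁, b₀, hBB⟩ := sq_decomp B h₂
  set S : Set (Matrix (Fin n) (Fin n) F) :=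
    ({1, A, B} : Set (Matrix (Fin n) (Fin n) F)) ∪
      ⋃ m ∈ Set.Icc 1 (n - 1),
        {(A * B) ^ m, (A * B) ^ m * A, (B * A) ^ m, (B * A) ^ m * B} with hS
  set W := Submodule.span F S with hW
  -- basic memberships
  have h1 : (1 : Matrix (Fin n) (Fin n) F) ∈ W :=
    Submodule.subset_span (Or.inl (Set.mem_insert _ _))
  have hAW : A ∈ W :=
    Submodule.subset_span (Or.inl (Set.mem_insert_of_mem _ (Set.mem_insert _ _)))
  have hBW : B ∈ W :=
    Submodule.subset_span (Or.inl (Set.mem_insert_of_mem _ (Set.mem_insert_of_mem _ rfl)))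
  have hmem : ∀ m, 1 ≤ m → m ≤ n - 1 →
      ∀ x ∈ ({(A * B) ^ m, (A * B) ^ m * A, (B * A) ^ m, (B * A) ^ m * B} :
        Set (Matrix (Fin n) (Fin n) F)), x ∈ W := by
    intro m hm1 hm2 x hx
    exact Submodule.subset_span (Or.inr (Set.mem_biUnion ⟨hm1, hm2⟩ hx))
  -- families up to n-1
  have hABle : ∀ m ≤ n - 1, (A * B) ^ m ∈ W := by
    intro m hm
    rcases Nat.eq_zero_or_pos m with rfl | hm1
    · rw [pow_zero]; exact h1
    · exact hmem m hm1 hm _ (Set.mem_insert _ _)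
  have hABAle : ∀ m ≤ n - 1, (A * B) ^ m * A ∈ W := by
    intro m hm
    rcases Nat.eq_zero_or_pos m with rfl | hm1
    · rw [pow_zero, one_mul]; exact hAW
    · exact hmem m hm1 hm _ (Set.mem_insert_of_mem _ (Set.mem_insert _ _))
  have hBAle : ∀ m ≤ n - 1, (B * A) ^ m ∈ W := by
    intro m hm
    rcases Nat.eq_zero_or_pos m with rfl | hm1
    · rw [pow_zero]; exact h1
    · exact hmem m hm1 hm _
        (Set.mem_insert_of_mem _ (Set.mem_insert_of_mem _ (Set.mem_insert _ _)))
  have hBABle : ∀ m ≤ n - 1, (B * A) ^ m * B ∈ W := by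
    intro m hm
    rcases Nat.eq_zero_or_pos m with rfl | hm1
    · rw [pow_zero, one_mul]; exact hBW
    · exact hmem m hm1 hm _
        (Set.mem_insert_of_mem _ (Set.mem_insert_of_mem _ (Set.mem_insert_of_mem _ rfl)))
  -- extend to n using Cayley-Hamilton
  have hCH : ∀ M N : Matrix (Fin n) (Fin n) F,
      (∀ i < n, M ^ i * N ∈ W) → M ^ n * N ∈ W := by
    intro M N h
    have key := aux_pow_mem W M N (Matrix.charpoly M) (Matrix.charpoly_monic M)
      (Matrix.aeval_self_charpoly M)
      (by rw [Matrix.charpoly_natDegree_eq_dim, Fintype.card_fin]; omega)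
      (by rw [Matrix.charpoly_natDegree_eq_dim, Fintype.card_fin]; exact h)
    rwa [Matrix.charpoly_natDegree_eq_dim, Fintype.card_fin] at key
  have hABn : ∀ m ≤ n, (A * B) ^ m ∈ W := by
    intro m hm
    rcases eq_or_lt_of_le hm with rfl | hlt
    · have := hCH (A * B) 1 (fun i hi => by rw [mul_one]; exact hABle i (by omega))
      rwa [mul_one] at this
    · exact hABle m (by omega)
  have hABAn : ∀ m ≤ n, (A * B) ^ m * A ∈ W := by
    intro m hm
    rcases eq_or_lt_of_le hm with rfl | hlt
    · exact hCH (A * B) A (fun i hi => hABAle i (by omega))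
    · exact hABAle m (by omega)
  have hBAn : ∀ m ≤ n, (B * A) ^ m ∈ W := by
    intro m hm
    rcases eq_or_lt_of_le hm with rfl | hlt
    · have := hCH (B * A) 1 (fun i hi => by rw [mul_one]; exact hBAle i (by omega))
      rwa [mul_one] at this
    · exact hBAle m (by omega)
  have hBABn : ∀ m ≤ n, (B * A) ^ m * B ∈ W := by
    intro m hm
    rcases eq_or_lt_of_le hm with rfl | hlt
    · exact hCH (B * A) B (fun i hi => hBABle i (by omega))
    · exact hBABle m (by omega)
  -- products of generators with A and B are in W
  have hSA : ∀ s ∈ S, s * A ∈ W := by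
    intro s hs
    rcases hs with hs | hs
    · rcases hs with hs | hs | hs
      · rw [hs, one_mul]; exact hAW
      · rw [hs, hAA]
        exact add_mem (W.smul_mem _ hAW) (W.smul_mem _ h1)
      · rw [hs, ← pow_one (B * A)]; exact hBAn 1 (by omega)
    · simp only [Set.mem_iUnion, Set.mem_Icc] at hs
      obtain ⟨m, ⟨hm1, hm2⟩, hs⟩ := hs
      rcases hs with hs | hs | hs | hs <;> rw [hs]
      · exact hABAn m (by omega)
      · rw [mul_assoc, hAA, mul_add, mul_smul_comm, mul_smul_comm, mul_one]
        exact add_mem (W.smul_mem _ (hABAn m (by omega))) (W.smul_mem _ (hABn m (by omega)))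
      · have hsplit : (B * A) ^ m = (B * A) ^ (m - 1) * (B * A) := by
          rw [← pow_succ]; congr 1; omega
        have : (B * A) ^ m * A =
            a₁ • (B * A) ^ m + a₀ • ((B * A) ^ (m - 1) * B) := by
          calc (B * A) ^ m * A = (B * A) ^ (m - 1) * (B * (A * A)) := by
                rw [hsplit, mul_assoc, mul_assoc]
            _ = (B * A) ^ (m - 1) * (B * (a₁ • A + a₀ • 1)) := by rw [hAA]
            _ = a₁ • ((B * A) ^ (m - 1) * (B * A)) + a₀ • ((B * A) ^ (m - 1) * B) := by
                rw [mul_add, mul_add, mul_smul_comm, mul_smul_comm, mul_smul_comm,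
                  mul_smul_comm, mul_one]
            _ = a₁ • (B * A) ^ m + a₀ • ((B * A) ^ (m - 1) * B) := by rw [← hsplit]
        rw [this]
        exact add_mem (W.smul_mem _ (hBAn m (by omega)))
          (W.smul_mem _ (hBABn (m - 1) (by omega)))
      · rw [mul_assoc, ← pow_succ]
        exact hBAn (m + 1) (by omega)
  have hSB : ∀ s ∈ S, s * B ∈ W := by
    intro s hs
    rcases hs with hs | hs
    · rcases hs with hs | hs | hs
      · rw [hs, one_mul]; exact hBW
      · rw [hs, ← pow_one (A * B)]; exact hABn 1 (by omega)
      · rw [hs, hBB]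
        exact add_mem (W.smul_mem _ hBW) (W.smul_mem _ h1)
    · simp only [Set.mem_iUnion, Set.mem_Icc] at hs
      obtain ⟨m, ⟨hm1, hm2⟩, hs⟩ := hs
      rcases hs with hs | hs | hs | hs <;> rw [hs]
      · have hsplit : (A * B) ^ m = (A * B) ^ (m - 1) * (A * B) := by
          rw [← pow_succ]; congr 1; omega
        have : (A * B) ^ m * B =
            b₁ • (A * B) ^ m + b₀ • ((A * B) ^ (m - 1) * A) := by
          calc (A * B) ^ m * B = (A * B) ^ (m - 1) * (A * (B * B)) := by
                rw [hsplit, mul_assoc, mul_assoc]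
            _ = (A * B) ^ (m - 1) * (A * (b₁ • B + b₀ • 1)) := by rw [hBB]
            _ = b₁ • ((A * B) ^ (m - 1) * (A * B)) + b₀ • ((A * B) ^ (m - 1) * A) := by
                rw [mul_add, mul_add, mul_smul_comm, mul_smul_comm, mul_smul_comm,
                  mul_smul_comm, mul_one]
            _ = b₁ • (A * B) ^ m + b₀ • ((A * B) ^ (m - 1) * A) := by rw [← hsplit]
        rw [this]
        exact add_mem (W.smul_mem _ (hABn m (by omega)))
          (W.smul_mem _ (hABAle (m - 1) (by omega)))
      · rw [mul_assoc, ← pow_succ]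
        exact hABn (m + 1) (by omega)
      · exact hBABn m (by omega)
      · rw [mul_assoc, hBB, mul_add, mul_smul_comm, mul_smul_comm, mul_one]
        exact add_mem (W.smul_mem _ (hBABn m (by omega))) (W.smul_mem _ (hBAn m (by omega)))
  -- W is closed under right multiplication by A and B
  have hWA : ∀ v ∈ W, v * A ∈ W := by
    intro v hv
    induction hv using Submodule.span_induction with
    | mem x hx => exact hSA x hx
    | zero => rw [zero_mul]; exact W.zero_mem
    | add x y _ _ hx hy => rw [add_mul]; exact add_mem hx hy
    | smul c x _ hx => rw [smul_mul_assoc]; exact W.smul_mem c hx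
  have hWB : ∀ v ∈ W, v * B ∈ W := by
    intro v hv
    induction hv using Submodule.span_induction with
    | mem x hx => exact hSB x hx
    | zero => rw [zero_mul]; exact W.zero_mem
    | add x y _ _ hx hy => rw [add_mul]; exact add_mem hx hy
    | smul c x _ hx => rw [smul_mul_assoc]; exact W.smul_mem c hx
  -- closure under right multiplication by words
  have hMul : ∀ w ∈ Submonoid.closure ({A, B} : Set (Matrix (Fin n) (Fin n) F)),
      ∀ v ∈ W, v * w ∈ W := by
    intro w hw
    refine Submonoid.closure_induction
      (motive := fun x _ => ∀ v ∈ W, v * x ∈ W) ?_ ?_ ?_ hw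
    · rintro x (rfl | rfl) v hv
      · exact hWA v hv
      · exact hWB v hv
    · intro v hv; rwa [mul_one]
    · intro x y _ _ px py v hv
      rw [← mul_assoc]
      exact py _ (px _ hv)
  apply le_antisymm
  · rw [Submodule.span_le]
    intro x hx
    simp only [SetLike.mem_coe, Subalgebra.mem_toSubmodule]
    have hAadj : A ∈ Algebra.adjoin F {A, B} := Algebra.subset_adjoin (Set.mem_insert _ _)
    have hBadj : B ∈ Algebra.adjoin F {A, B} :=
      Algebra.subset_adjoin (Set.mem_insert_of_mem _ rfl)
    rcases hx with hx | hx
    · rcases hx with rfl | rfl | rfl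
      · exact one_mem _
      · exact hAadj
      · exact hBadj
    · simp only [Set.mem_iUnion, Set.mem_Icc] at hx
      obtain ⟨m, _, hx⟩ := hx
      rcases hx with rfl | rfl | rfl | rfl
      · exact pow_mem (mul_mem hAadj hBadj) m
      · exact mul_mem (pow_mem (mul_mem hAadj hBadj) m) hAadj
      · exact pow_mem (mul_mem hBadj hAadj) m
      · exact mul_mem (pow_mem (mul_mem hBadj hAadj) m) hBadj
  · rw [Algebra.adjoin_eq_span, Submodule.span_le]
    intro w hw
    have := hMul w hw 1 h1
    rwa [one_mul] at this
end

section
/- For every prime power q, the character field of Sp₄(𝔽_q) is all of 𝔽_q: the subfield of 𝔽_q generated by the traces of elements of Sp₄(𝔽_q) equals 𝔽_q. -/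
/-- The character field of `Sp₄(𝔽_q)` is all of `𝔽_q`: the subfield generated
by the traces of symplectic matrices is the whole finite field. -/
theorem stmt_4 (F : Type*) [Field F] [Fintype F] :
    Subfield.closure
      {x : F | ∃ g ∈ Matrix.symplecticGroup (Fin 2) F, x = Matrix.trace g} = ⊤ := by
  rw [eq_top_iff]
  intro x _
  apply Subfield.subset_closure
  refine ⟨Matrix.fromBlocks !![x-2,0;0,1] !![-1,0;0,0] !![1,0;0,0] !![0,0;0,1], ?_, ?_⟩
  · rw [SymplecticGroup.mem_iff, Matrix.J, Matrix.fromBlocks_transpose,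
      Matrix.fromBlocks_multiply, Matrix.fromBlocks_multiply]
    rw [Matrix.fromBlocks_inj]
    refine ⟨?_, ?_, ?_, ?_⟩ <;>
      · ext i j
        fin_cases i <;> fin_cases j <;>
          simp [Matrix.mul_apply, Fin.sum_univ_succ, Matrix.vecHead, Matrix.vecTail,
            Matrix.transpose]
  · simp [Matrix.trace, Fintype.sum_sum_type, Fin.sum_univ_succ, Matrix.fromBlocks]
    ring
end

section
/- Let F be a field and g ∈ Sp₄(F) of order 3. Then the characteristic polynomial of g is (T²+T+1)² if char F = 3 or 1 is not an eigenvalue of g, and (T−1)²(T²+T+1) if char F ≠ 3 and 1 is an eigenvalue of g. Moreover the minimal polynomial of g is (T−1)(T²+T+1) in the second case and T²+T+1 otherwise. -/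
open Polynomial Matrix

namespace Stmt6Aux

variable {F : Type*} [Field F]

local notation "ι" => (Fin 2 ⊕ Fin 2)
local notation "JJ" => Matrix.J (Fin 2) F

lemma charpoly_dvd_cube (g : Matrix ι ι F) (h3 : g ^ 3 = 1) :
    g.charpoly ∣ ((X : F[X]) ^ 3 - 1) ^ 4 := by
  set S : Matrix ι ι F[X] := Matrix.scalar _ (X : F[X]) with hS
  set G : Matrix ι ι F[X] := (C : F →+* F[X]).mapMatrix g with hG
  have hcomm : Commute S G := (Matrix.scalar_commute (X : F[X]) (fun r => Commute.all _ r) G)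
  have key := hcomm.geom_sum₂_mul 3
  have hG3 : G ^ 3 = 1 := by
    rw [hG, ← map_pow, h3, RingHom.map_one]
  have hS3 : S ^ 3 - G ^ 3 = Matrix.scalar ι ((X : F[X]) ^ 3 - 1) := by
    rw [hG3, hS, ← map_pow, map_sub (Matrix.scalar ι), RingHom.map_one]
  have hdet : ((X : F[X]) ^ 3 - 1) ^ 4 = (Matrix.scalar ι ((X:F[X])^3 - 1)).det := by
    rw [Matrix.scalar_apply, Matrix.det_diagonal, Finset.prod_const]
    simp
  rw [hdet, ← hS3, ← key, Matrix.det_mul]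
  exact dvd_mul_left _ _

lemma det_eq_one (g : Matrix ι ι F) (hg : g ∈ Matrix.symplecticGroup (Fin 2) F)
    (h3 : g ^ 3 = 1) : g.det = 1 := by
  have h := SymplecticGroup.mem_iff.mp hg
  apply_fun Matrix.det at h
  rw [Matrix.det_mul, Matrix.det_mul, Matrix.det_transpose] at h
  have hJ := Matrix.J_det_mul_J_det (Fin 2) F
  have hJ0 : (Matrix.J (Fin 2) F).det ≠ 0 := by
    intro e; rw [e, zero_mul] at hJ; exact zero_ne_one hJ
  have h2 : g.det * g.det = 1 := by
    have h' : (Matrix.J (Fin 2) F).det * (g.det * g.det) = (Matrix.J (Fin 2) F).det * 1 := by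
      linear_combination h
    exact mul_left_cancel₀ hJ0 h'
  have h3' : g.det ^ 3 = 1 := by rw [← Matrix.det_pow, h3, Matrix.det_one]
  calc g.det = g.det ^ 3 := by rw [pow_succ, pow_two, h2, one_mul]
  _ = 1 := h3'

lemma monic_eq_of_assoc {c d : F[X]} (hc : c.Monic) (hd : d.Monic) (h : Associated c d) : c = d :=
  Polynomial.eq_of_monic_of_associated hc hd h

lemma split2 {c p q : F[X]} (hc : c.Monic) (hp : p.Monic) (hq : q.Monic)
    (hpp : Prime p) (hqp : Prime q) {m n : ℕ} (h : c ∣ p ^ m * q ^ n) :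
    ∃ a ≤ m, ∃ b ≤ n, c = p ^ a * q ^ b := by
  obtain ⟨d₁, d₂, hd₁, hd₂, rfl⟩ := exists_dvd_and_dvd_of_dvd_mul h
  obtain ⟨a, ha, h₁⟩ := (dvd_prime_pow hpp m).mp hd₁
  obtain ⟨b, hb, h₂⟩ := (dvd_prime_pow hqp n).mp hd₂
  exact ⟨a, ha, b, hb,
    Polynomial.eq_of_monic_of_associated hc ((hp.pow a).mul (hq.pow b)) (h₁.mul_mul h₂)⟩

lemma split3 {c p q r : F[X]} (hc : c.Monic) (hp : p.Monic) (hq : q.Monic) (hr : r.Monic)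
    (hpp : Prime p) (hqp : Prime q) (hrp : Prime r) {m n k : ℕ}
    (h : c ∣ p ^ m * (q ^ n * r ^ k)) :
    ∃ a ≤ m, ∃ b ≤ n, ∃ e ≤ k, c = p ^ a * (q ^ b * r ^ e) := by
  obtain ⟨d₁, d₂, hd₁, hd₂, rfl⟩ := exists_dvd_and_dvd_of_dvd_mul h
  obtain ⟨d₃, d₄, hd₃, hd₄, rfl⟩ := exists_dvd_and_dvd_of_dvd_mul hd₂
  obtain ⟨a, ha, h₁⟩ := (dvd_prime_pow hpp m).mp hd₁
  obtain ⟨b, hb, h₂⟩ := (dvd_prime_pow hqp n).mp hd₃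
  obtain ⟨e, he, h₃⟩ := (dvd_prime_pow hrp k).mp hd₄
  exact ⟨a, ha, b, hb, e, he,
    Polynomial.eq_of_monic_of_associated hc ((hp.pow a).mul ((hq.pow b).mul (hr.pow e)))
      (h₁.mul_mul (h₂.mul_mul h₃))⟩

lemma monic_eq_prime_pow {c p : F[X]} (hc : c.Monic) (hp : p.Monic) (hpp : Prime p)
    {n : ℕ} (h : c ∣ p ^ n) : ∃ a ≤ n, c = p ^ a := by
  obtain ⟨a, ha, h₁⟩ := (dvd_prime_pow hpp n).mp h
  exact ⟨a, ha, Polynomial.eq_of_monic_of_associated hc (hp.pow a) h₁⟩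

lemma eval_charpoly (g : Matrix ι ι F) (t : F) :
    g.charpoly.eval t = (Matrix.scalar ι t - g).det := by
  rw [Matrix.charpoly, ← Polynomial.coe_evalRingHom, RingHom.map_det]
  congr 1
  ext i j
  by_cases h : i = j
  · subst h; simp [Matrix.charmatrix_apply_eq, Matrix.scalar_apply]
  · simp [Matrix.charmatrix_apply_ne _ _ _ h, Matrix.scalar_apply, Matrix.diagonal_apply_ne _ h]

lemma eigen_of_root (g : Matrix ι ι F) {t : F} (hroot : g.charpoly.IsRoot t) :
    ∃ x : ι → F, x ≠ 0 ∧ g *ᵥ x = t • x := by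
  have hdet : (Matrix.scalar ι t - g).det = 0 := by
    rw [← eval_charpoly]; exact hroot
  obtain ⟨v, hv0, hv⟩ := (Matrix.exists_mulVec_eq_zero_iff).mpr hdet
  refine ⟨v, hv0, ?_⟩
  rw [Matrix.sub_mulVec] at hv
  have : Matrix.scalar ι t *ᵥ v = t • v := by
    rw [Matrix.scalar_apply]
    ext i
    simp [Matrix.mulVec_diagonal]
  rw [this] at hv
  linear_combination (norm := module) -hv

lemma pair_invariant (g : Matrix ι ι F) (hg : g ∈ Matrix.symplecticGroup (Fin 2) F)
    (x y : ι → F) : (g *ᵥ x) ⬝ᵥ (JJ *ᵥ (g *ᵥ y)) = x ⬝ᵥ (JJ *ᵥ y) := by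
  have h := SymplecticGroup.mem_iff'.mp hg
  calc (g *ᵥ x) ⬝ᵥ (JJ *ᵥ (g *ᵥ y))
      = ((g *ᵥ x) ᵥ* JJ) ⬝ᵥ (g *ᵥ y) := by rw [Matrix.dotProduct_mulVec]
    _ = ((x ᵥ* gᵀ) ᵥ* JJ) ⬝ᵥ (g *ᵥ y) := by rw [Matrix.vecMul_transpose]
    _ = (x ᵥ* (gᵀ * JJ)) ⬝ᵥ (g *ᵥ y) := by rw [Matrix.vecMul_vecMul]
    _ = x ⬝ᵥ ((gᵀ * JJ) *ᵥ (g *ᵥ y)) := (Matrix.dotProduct_mulVec _ _ _).symm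
    _ = x ⬝ᵥ ((gᵀ * JJ * g) *ᵥ y) := by rw [Matrix.mulVec_mulVec]
    _ = x ⬝ᵥ (JJ *ᵥ y) := by rw [h]

lemma vanish_zero (x : ι → F) (h : ∀ y, x ⬝ᵥ (JJ *ᵥ y) = 0) : x = 0 := by
  have hv : x ᵥ* JJ = 0 := by
    ext j
    have := h (Pi.single j 1)
    rw [Matrix.mulVec_single] at this
    simpa [dotProduct, Matrix.vecMul, mul_comm] using this
  have h2 : x ᵥ* (JJ * JJ) = 0 := by rw [← Matrix.vecMul_vecMul, hv, Matrix.zero_vecMul]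
  rw [Matrix.J_squared] at h2
  simpa [Matrix.vecMul_neg, Matrix.vecMul_one, neg_eq_zero] using h2



lemma excl_pair (g : Matrix ι ι F) (hg : g ∈ Matrix.symplecticGroup (Fin 2) F)
    (ω : F) (hω3 : ω ^ 3 = 1) (hω1 : ω ≠ 1) (hne : g ≠ 1)
    (hmul : (g - 1) * (g - algebraMap F (Matrix ι ι F) ω) = 0) : False := by
  set s : Matrix ι ι F := algebraMap F (Matrix ι ι F) ω with hs
  have hω2 : ω ^ 2 ≠ 1 := by
    intro h
    apply hω1
    calc ω = ω * ω ^ 2 := by rw [h, mul_one]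
    _ = 1 := by rw [← pow_succ', hω3]
  have hg1 : g - 1 ≠ 0 := fun h => hne (by linear_combination (norm := noncomm_ring) h)
  have hu : ¬ IsUnit (g - s) := by
    intro h
    apply hg1
    have := hmul.trans (zero_mul (g - s)).symm
    exact IsUnit.mul_left_injective h this
  have hdet : (g - s).det = 0 := by
    by_contra h
    exact hu ((Matrix.isUnit_iff_isUnit_det _).mpr (Ne.isUnit h))
  obtain ⟨x, hx0, hx⟩ := (Matrix.exists_mulVec_eq_zero_iff).mpr hdet
  have hsv : ∀ v : ι → F, s *ᵥ v = ω • v := by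
    intro v
    rw [hs, Algebra.algebraMap_eq_smul_one, Matrix.smul_mulVec, Matrix.one_mulVec]
  have hgx : g *ᵥ x = ω • x := by
    rw [Matrix.sub_mulVec, hsv] at hx
    linear_combination (norm := module) hx
  have hcomm : (g - s) * (g - 1) = 0 := by
    have hc : Commute (g - 1) (g - s) :=
      ((Commute.refl g).sub_left (Commute.one_left g)).sub_right
        ((Algebra.commutes ω (g - 1)).symm)
    rw [← hc.eq, hmul]
  -- x pairs to zero with eigenvectors of eigenvalue ω
  have key1 : ∀ z, g *ᵥ z = ω • z → x ⬝ᵥ (JJ *ᵥ z) = 0 := by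
    intro z hz
    have h := pair_invariant g hg x z
    rw [hgx, hz, Matrix.mulVec_smul, smul_dotProduct, dotProduct_smul, smul_eq_mul, smul_eq_mul] at h
    have h' : (ω ^ 2 - 1) * (x ⬝ᵥ (JJ *ᵥ z)) = 0 := by linear_combination h
    rcases mul_eq_zero.mp h' with h'' | h''
    · exact absurd (by linear_combination h'') hω2
    · exact h''
  have key2 : ∀ z, g *ᵥ z = z → x ⬝ᵥ (JJ *ᵥ z) = 0 := by
    intro z hz
    have h := pair_invariant g hg x z
    rw [hgx, hz, smul_dotProduct, smul_eq_mul] at h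
    have h' : (ω - 1) * (x ⬝ᵥ (JJ *ᵥ z)) = 0 := by linear_combination h
    rcases mul_eq_zero.mp h' with h'' | h''
    · exact absurd (by linear_combination h'') hω1
    · exact h''
  have hall : ∀ y, x ⬝ᵥ (JJ *ᵥ y) = 0 := by
    intro y
    set z₁ := (g - 1) *ᵥ y with hz₁
    set z₂ := (g - s) *ᵥ y with hz₂
    have hz₁e : g *ᵥ z₁ = ω • z₁ := by
      have : (g - s) *ᵥ z₁ = 0 := by
        rw [hz₁, Matrix.mulVec_mulVec, hcomm, Matrix.zero_mulVec]
      rw [Matrix.sub_mulVec, hsv] at this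
      linear_combination (norm := module) this
    have hz₂e : g *ᵥ z₂ = z₂ := by
      have : (g - 1) *ᵥ z₂ = 0 := by
        rw [hz₂, Matrix.mulVec_mulVec, hmul, Matrix.zero_mulVec]
      rw [Matrix.sub_mulVec, Matrix.one_mulVec] at this
      linear_combination (norm := module) this
    have hdecomp : (ω - 1) • y = z₁ - z₂ := by
      rw [hz₁, hz₂, ← Matrix.sub_mulVec]
      have : (g - 1) - (g - s) = s - 1 := by abel
      rw [this, Matrix.sub_mulVec, hsv, Matrix.one_mulVec]
      module
    have h0 : x ⬝ᵥ (JJ *ᵥ ((ω - 1) • y)) = 0 := by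
      rw [hdecomp, Matrix.mulVec_sub, dotProduct_sub, key1 z₁ hz₁e, key2 z₂ hz₂e,
        sub_zero]
    rw [Matrix.mulVec_smul, dotProduct_smul] at h0
    rcases smul_eq_zero.mp h0 with h'' | h''
    · exact absurd (by linear_combination h'') hω1
    · exact h''
  exact hx0 (vanish_zero x hall)

lemma range_sq_le_one {f : (ι → F) →ₗ[F] (ι → F)} (h : f ∘ₗ f ∘ₗ f = 0) :
    Module.finrank F (LinearMap.range (f ∘ₗ f)) ≤ 1 := by
  by_contra hcon
  push_neg at hcon
  have h2 : 2 ≤ Module.finrank F (LinearMap.range (f ∘ₗ f)) := hcon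
  have hle1 : LinearMap.range (f ∘ₗ f) ≤ LinearMap.range f := LinearMap.range_comp_le_range f f
  have hle2 : LinearMap.range (f ∘ₗ f) ≤ LinearMap.ker f := by
    rintro _ ⟨y, rfl⟩
    have : (f ∘ₗ f ∘ₗ f) y = 0 := by rw [h]; rfl
    simpa using this
  have hrk := LinearMap.finrank_range_add_finrank_ker f
  have hdim : Module.finrank F (ι → F) = 4 := by simp
  rw [hdim] at hrk
  have m1 : Module.finrank F (LinearMap.range (f ∘ₗ f)) ≤
      Module.finrank F (LinearMap.range f) := Submodule.finrank_mono hle1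
  have m2 : Module.finrank F (LinearMap.range (f ∘ₗ f)) ≤
      Module.finrank F (LinearMap.ker f) := Submodule.finrank_mono hle2
  have e1 : LinearMap.range (f ∘ₗ f) = LinearMap.ker f :=
    Submodule.eq_of_le_of_finrank_le hle2 (by omega)
  have e2 : LinearMap.range (f ∘ₗ f) = LinearMap.range f :=
    Submodule.eq_of_le_of_finrank_le hle1 (by omega)
  have hzero : ∀ v, f (f v) = 0 := by
    intro v
    have hm : f v ∈ LinearMap.range f := LinearMap.mem_range_self f v
    rw [← e2, e1] at hm
    exact hm
  have hff : f ∘ₗ f = 0 := LinearMap.ext fun v => hzero v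
  rw [LinearMap.range_eq_bot.mpr hff] at h2
  simp at h2

lemma sq_zero_of_cube_zero (g : Matrix ι ι F) (hg : g ∈ Matrix.symplecticGroup (Fin 2) F)
    (h2F : (2 : F) ≠ 0) (hN3 : (g - 1) ^ 3 = 0) : (g - 1) ^ 2 = 0 := by
  set N : Matrix ι ι F := g - 1 with hN
  have hJ2 := Matrix.J_squared (Fin 2) F
  have hT3 : (Nᵀ) ^ 3 = 0 := by rw [← Matrix.transpose_pow, hN3, Matrix.transpose_zero]
  have hrel : N * JJ + JJ * Nᵀ + N * JJ * Nᵀ = 0 := by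
    have h := SymplecticGroup.mem_iff.mp hg
    have hgN : g = 1 + N := by rw [hN]; abel
    rw [hgN, Matrix.transpose_add, Matrix.transpose_one] at h
    have expand : (1 + N) * JJ * (1 + Nᵀ)
        = JJ + (N * JJ + JJ * Nᵀ + N * JJ * Nᵀ) := by noncomm_ring
    rw [expand] at h
    have := sub_eq_zero.mpr h
    linear_combination (norm := noncomm_ring) this
  have h1 : N * JJ * Nᵀ ^ 2 = 0 := by
    have e := congrArg (fun M => M * Nᵀ ^ 2) hrel
    simp only [add_mul, zero_mul] at e
    have r1 : JJ * Nᵀ * Nᵀ ^ 2 = 0 := by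
      rw [mul_assoc, ← pow_succ', hT3, mul_zero]
    have r2 : N * JJ * Nᵀ * Nᵀ ^ 2 = 0 := by
      rw [mul_assoc, ← pow_succ', hT3, mul_zero]
    rw [r1, r2, add_zero, add_zero] at e
    exact e
  have h2 : N ^ 2 * (JJ * Nᵀ) = 0 := by
    have e := congrArg (fun M => N ^ 2 * M) hrel
    simp only [mul_add, mul_zero] at e
    have r1 : N ^ 2 * (N * JJ) = 0 := by
      rw [← mul_assoc, ← pow_succ, hN3, zero_mul]
    have r2 : N ^ 2 * (N * JJ * Nᵀ) = 0 := by
      rw [show N * JJ * Nᵀ = N * (JJ * Nᵀ) from mul_assoc _ _ _, ← mul_assoc, ← pow_succ, hN3,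
        zero_mul]
    rw [r1, r2, zero_add, add_zero] at e
    exact e
  have h3 : N ^ 2 * JJ = -(N * (JJ * Nᵀ)) := by
    have e := congrArg (fun M => N * M) hrel
    simp only [mul_add, mul_zero] at e
    have r1 : N * (N * JJ) = N ^ 2 * JJ := by rw [← mul_assoc, ← pow_two]
    have r2 : N * (N * JJ * Nᵀ) = 0 := by
      rw [show N * JJ * Nᵀ = N * (JJ * Nᵀ) from mul_assoc _ _ _, ← mul_assoc, ← pow_two]
      exact h2
    rw [r1, r2, add_zero] at e
    exact eq_neg_of_add_eq_zero_left e
  have h4 : JJ * Nᵀ ^ 2 = -(N * (JJ * Nᵀ)) := by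
    have e := congrArg (fun M => M * Nᵀ) hrel
    simp only [add_mul, zero_mul] at e
    have r1 : JJ * Nᵀ * Nᵀ = JJ * Nᵀ ^ 2 := by rw [mul_assoc, ← pow_two]
    have r2 : N * JJ * Nᵀ * Nᵀ = 0 := by
      rw [mul_assoc, ← pow_two]
      exact h1
    have r3 : N * JJ * Nᵀ = N * (JJ * Nᵀ) := mul_assoc _ _ _
    rw [r1, r2, add_zero, r3] at e
    exact eq_neg_of_add_eq_zero_right e
  have hA : N ^ 2 * JJ = JJ * Nᵀ ^ 2 := h3.trans h4.symm
  set A : Matrix ι ι F := N ^ 2 * JJ with hAdef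
  have hskew : Aᵀ = -A := by
    rw [hAdef, Matrix.transpose_mul, Matrix.J_transpose, Matrix.transpose_pow,
      Matrix.neg_mul, ← hA]
  have hdiag : ∀ i, A i i = 0 := by
    intro i
    have h := congrFun (congrFun hskew i) i
    rw [Matrix.transpose_apply, Matrix.neg_apply] at h
    have h2 : (2 : F) * A i i = 0 := by linear_combination h
    rcases mul_eq_zero.mp h2 with h' | h'
    · exact absurd h' h2F
    · exact h'
  -- suffices A = 0
  have hgoal : A = 0 → N ^ 2 = 0 := by
    intro h0
    have : N ^ 2 * (JJ * JJ) = 0 := by rw [← mul_assoc, ← hAdef, h0, zero_mul]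
    rw [hJ2, mul_neg, mul_one, neg_eq_zero] at this
    exact this
  apply hgoal
  by_contra hA0
  have hex : ∃ i j, A i j ≠ 0 := by
    by_contra hc
    push_neg at hc
    exact hA0 (by ext i j; simpa using hc i j)
  obtain ⟨i, j, hij⟩ := hex
  -- linear algebra: columns of A span a ≤1-dimensional space
  set f : (ι → F) →ₗ[F] (ι → F) := (N : Matrix ι ι F).mulVecLin with hf
  have hf3 : f ∘ₗ f ∘ₗ f = 0 := by
    rw [hf, ← Matrix.mulVecLin_mul, ← Matrix.mulVecLin_mul]
    rw [show N * (N * N) = N ^ 3 by rw [pow_succ, pow_two]; noncomm_ring, hN3,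
      Matrix.mulVecLin_zero]
  have hr1 : Module.finrank F (LinearMap.range (f ∘ₗ f)) ≤ 1 := range_sq_le_one hf3
  have hAcomp : (A : Matrix ι ι F).mulVecLin = (f ∘ₗ f) ∘ₗ (JJ : Matrix ι ι F).mulVecLin := by
    rw [hf, ← Matrix.mulVecLin_mul, ← Matrix.mulVecLin_mul, hAdef, pow_two, mul_assoc]
  have hleA : LinearMap.range (A : Matrix ι ι F).mulVecLin ≤ LinearMap.range (f ∘ₗ f) := by
    rw [hAcomp]
    exact LinearMap.range_comp_le_range _ _
  have hcolmem : ∀ l, (fun k => A k l) ∈ LinearMap.range (A : Matrix ι ι F).mulVecLin := by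
    intro l
    refine ⟨Pi.single l 1, ?_⟩
    rw [Matrix.mulVecLin_apply, Matrix.mulVec_single]
    ext k
    simp
  set u : ι → F := fun k => A k j with hu
  have hu0 : u ≠ 0 := fun h => hij (by have h' := congrFun h i; simpa using h')
  have hspan : Submodule.span F {u} = LinearMap.range (A : Matrix ι ι F).mulVecLin := by
    apply Submodule.eq_of_le_of_finrank_le
    · rw [Submodule.span_le, Set.singleton_subset_iff]
      exact hcolmem j
    · calc Module.finrank F (LinearMap.range (A : Matrix ι ι F).mulVecLin)
          ≤ Module.finrank F (LinearMap.range (f ∘ₗ f)) := Submodule.finrank_mono hleA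
      _ ≤ 1 := hr1
      _ = Module.finrank F (Submodule.span F {u}) := (finrank_span_singleton hu0).symm
  have hcol : ∀ l, ∃ cl : F, ∀ k, A k l = cl * u k := by
    intro l
    have := hcolmem l
    rw [← hspan, Submodule.mem_span_singleton] at this
    obtain ⟨cl, hcl⟩ := this
    exact ⟨cl, fun k => by rw [← congrFun hcl k]; simp [mul_comm]⟩
  obtain ⟨ci, hci⟩ := hcol i
  have hui : u i = A i j := rfl
  have hci0 : ci = 0 := by
    have h0 : A i i = ci * u i := hci i
    rw [hdiag i, hui] at h0
    rcases mul_eq_zero.mp h0.symm with h' | h'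
    · exact h'
    · exact absurd h' hij
  have hji : A j i = 0 := by rw [hci j, hci0, zero_mul]
  have h := congrFun (congrFun hskew j) i
  rw [Matrix.transpose_apply, Matrix.neg_apply, hji, neg_zero] at h
  exact hij h



lemma no_root_one (g : Matrix ι ι F) (h3F : (3:F) ≠ 0) (hq_g : g ^ 2 + g + 1 = 0) :
    ¬ g.charpoly.IsRoot 1 := by
  intro hroot
  obtain ⟨x, hx0, hx⟩ := eigen_of_root g hroot
  rw [one_smul] at hx
  have h := congrArg (fun M => M *ᵥ x) hq_g
  simp only [Matrix.add_mulVec, Matrix.one_mulVec, Matrix.zero_mulVec, pow_two,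
    ← Matrix.mulVec_mulVec, hx] at h
  obtain ⟨k, hk⟩ := Function.ne_iff.mp hx0
  have hk0 : x k = 0 := by
    have h' := congrFun h k
    simp only [Pi.add_apply, Pi.zero_apply] at h'
    have h3 : (3:F) * x k = 0 := by linear_combination h'
    rcases mul_eq_zero.mp h3 with h'' | h''
    · exact absurd h'' h3F
    · exact h''
  exact hk (by simpa using hk0)

end Stmt6Aux

open Stmt6Aux

/-- For `g ∈ Sp₄(F)` of order 3: if `char F = 3` or `1` is not an eigenvalue of
`g`, then the characteristic polynomial is `(T²+T+1)²` and the minimal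
polynomial is `T²+T+1`; if `char F ≠ 3` and `1` is an eigenvalue, then the
characteristic polynomial is `(T−1)²(T²+T+1)` and the minimal polynomial is
`(T−1)(T²+T+1)`. -/
theorem stmt_6 {F : Type*} [Field F]
    (g : Matrix (Fin 2 ⊕ Fin 2) (Fin 2 ⊕ Fin 2) F)
    (hg : g ∈ Matrix.symplecticGroup (Fin 2) F)
    (h3 : g ^ 3 = 1) (hne : g ≠ 1) :
    ((ringChar F = 3 ∨ ¬ g.charpoly.IsRoot 1) →
        g.charpoly = (X ^ 2 + X + 1) ^ 2 ∧ minpoly F g = X ^ 2 + X + 1) ∧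
      ((ringChar F ≠ 3 ∧ g.charpoly.IsRoot 1) →
        g.charpoly = (X - 1) ^ 2 * (X ^ 2 + X + 1) ∧
          minpoly F g = (X - 1) * (X ^ 2 + X + 1)) := by
  classical
  set q : F[X] := X ^ 2 + X + 1 with hqdef
  have hq_monic : q.Monic := by
    have h := Polynomial.monic_X_pow_add (p := (X + 1 : F[X])) (n := 2)
      (by apply lt_of_le_of_lt (Polynomial.degree_X_add_C 1).le; norm_num)
    simpa [hqdef, add_assoc] using h
  have hq_nat : q.natDegree = 2 := by
    rw [hqdef]
    compute_degree!
  have hq_ne : q ≠ 0 := hq_monic.ne_zero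
  have hX1m : (X - C (1:F)).Monic := monic_X_sub_C 1
  have hX1p : Prime (X - C (1:F)) := prime_X_sub_C 1
  have hX1 : (X - C (1:F)) = X - 1 := by rw [Polynomial.C_1]
  have hcube : ((X : F[X]) ^ 3 - 1) = (X - C 1) * q := by rw [hX1, hqdef]; ring
  -- minpoly and charpoly basics
  have hInt : IsIntegral F g := IsIntegral.of_finite F g
  have hm_monic : (minpoly F g).Monic := minpoly.monic hInt
  have hm_pos : 0 < (minpoly F g).natDegree := minpoly.natDegree_pos hInt
  have hm_dvd : minpoly F g ∣ (X - C 1) * q := by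
    rw [← hcube]
    exact minpoly.dvd F g (by simp [map_pow, h3])
  have hmc : minpoly F g ∣ g.charpoly := Matrix.minpoly_dvd_charpoly g
  have hc_monic : g.charpoly.Monic := Matrix.charpoly_monic g
  have hc_deg : g.charpoly.natDegree = 4 := by
    rw [Matrix.charpoly_natDegree_eq_dim]
    simp
  have hc_dvd : g.charpoly ∣ ((X - C 1) * q) ^ 4 := by
    rw [← hcube]; exact charpoly_dvd_cube g h3
  have hdet1 : g.det = 1 := det_eq_one g hg h3
  have hcoeff0 : g.charpoly.coeff 0 = 1 := by
    have h := Matrix.det_eq_sign_charpoly_coeff g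
    rw [hdet1] at h
    have hcard : Fintype.card (Fin 2 ⊕ Fin 2) = 4 := by simp
    rw [hcard, show ((-1:F)) ^ 4 = 1 by norm_num, one_mul] at h
    exact h.symm
  have hmne1 : minpoly F g ≠ X - C 1 := by
    intro h
    apply hne
    have ha := minpoly.aeval F g
    rw [h] at ha
    simp only [_root_.map_sub, aeval_X, aeval_C] at ha
    exact sub_eq_zero.mp (by simpa using ha)
  have main : ((3:F) = 0 ∧ g.charpoly = q ^ 2 ∧ minpoly F g = q) ∨
      ((3:F) ≠ 0 ∧ ¬ g.charpoly.IsRoot 1 ∧ g.charpoly = q ^ 2 ∧ minpoly F g = q) ∨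
      ((3:F) ≠ 0 ∧ g.charpoly.IsRoot 1 ∧ g.charpoly = (X-1) ^ 2 * q ∧
        minpoly F g = (X-1) * q) := by
    by_cases h3F : (3:F) = 0
    · -- characteristic 3
      left
      refine ⟨h3F, ?_⟩
      have h2F : (2:F) ≠ 0 := by
        intro h2
        have : (1:F) = 3 - 2 := by norm_num
        rw [h3F, h2, sub_zero] at this
        exact one_ne_zero this
      have hC3 : (3 : F[X]) = 0 := by
        rw [show (3:F[X]) = C (3:F) from (map_ofNat C 3).symm, h3F, map_zero]
      have hq31 : q = (X - 1) ^ 2 := by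
        rw [hqdef]
        linear_combination (X : F[X]) * hC3
      have h3M : (3 : Matrix (Fin 2 ⊕ Fin 2) (Fin 2 ⊕ Fin 2) F) = 0 := by
        rw [show (3 : Matrix (Fin 2 ⊕ Fin 2) (Fin 2 ⊕ Fin 2) F) = algebraMap F (Matrix (Fin 2 ⊕ Fin 2) (Fin 2 ⊕ Fin 2) F) (3:F) from
          (map_ofNat (algebraMap F (Matrix (Fin 2 ⊕ Fin 2) (Fin 2 ⊕ Fin 2) F)) 3).symm, h3F, map_zero]
      have hN3 : (g - 1) ^ 3 = 0 := by
        have e : (g - 1) ^ 3 = g ^ 3 - 3 * g ^ 2 + 3 * g - 1 := by noncomm_ring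
        rw [e, h3, h3M]
        noncomm_ring
      have hN2 := sq_zero_of_cube_zero g hg h2F hN3
      have hm2 : minpoly F g ∣ (X - C 1) ^ 2 := by
        apply minpoly.dvd F g
        have : aeval g ((X - C (1:F)) ^ 2) = (g - 1) ^ 2 := by
          simp [map_pow, map_sub]
        rw [this, hN2]
      obtain ⟨a, ha, hm_eq⟩ := monic_eq_prime_pow hm_monic hX1m hX1p hm2
      interval_cases a
      · rw [pow_zero] at hm_eq
        rw [hm_eq] at hm_pos
        simp at hm_pos
      · rw [pow_one] at hm_eq
        exact absurd hm_eq hmne1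
      · -- minpoly = (X-1)^2 = q
        have hmq : minpoly F g = q := by rw [hm_eq, hq31, hX1]
        have hcube3 : ((X:F[X]) ^ 3 - 1) = (X - C 1) ^ 3 := by
          rw [hX1]
          linear_combination ((X:F[X]) ^ 2 - X) * hC3
        have hc12 : g.charpoly ∣ (X - C 1) ^ 12 := by
          have h := charpoly_dvd_cube g h3
          rw [hcube3, ← pow_mul] at h
          exact h
        obtain ⟨k, hk, hc_eq⟩ := monic_eq_prime_pow hc_monic hX1m hX1p hc12
        have hk4 : k = 4 := by
          have := hc_deg
          rw [hc_eq, natDegree_pow, natDegree_X_sub_C, mul_one] at this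
          omega
        rw [hk4] at hc_eq
        refine ⟨?_, hmq⟩
        rw [hc_eq, hq31, hX1, ← pow_mul]
    · -- characteristic ≠ 3
      have hq1ne : ¬ q.IsRoot 1 := by
        intro h
        apply h3F
        rw [hqdef] at h
        simp only [IsRoot, eval_add, eval_pow, eval_X, eval_one, one_pow] at h
        linear_combination h
      have hqnd1 : ¬ (X - C (1:F)) ∣ q := fun h => hq1ne (dvd_iff_isRoot.mp h)
      by_cases hq_irr : Irreducible q
      · -- q irreducible over F
        have hq_prime : Prime q := UniqueFactorizationMonoid.irreducible_iff_prime.mp hq_irr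
        have hm_dvd1 : minpoly F g ∣ (X - C 1) ^ 1 * q ^ 1 := by
          rw [pow_one, pow_one]; exact hm_dvd
        obtain ⟨a, ha, b, hb, hm_eq⟩ := split2 hm_monic hX1m hq_monic hX1p hq_prime hm_dvd1
        interval_cases a <;> interval_cases b <;>
          simp only [pow_zero, pow_one, one_mul, mul_one] at hm_eq
        · rw [hm_eq] at hm_pos; simp at hm_pos
        · -- minpoly = q
          right; left
          have hq_g : g ^ 2 + g + 1 = 0 := by
            have ha' := minpoly.aeval F g
            rw [hm_eq, hqdef] at ha'
            simpa [map_pow] using ha'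
          have hnroot := no_root_one g h3F hq_g
          have hnd : ¬ (X - C (1:F)) ∣ g.charpoly := fun h => hnroot (dvd_iff_isRoot.mp h)
          have hcop : IsCoprime g.charpoly ((X - C (1:F)) ^ 4) :=
            ((hX1p.coprime_iff_not_dvd.mpr hnd).symm).pow_right
          have hcq : g.charpoly ∣ q ^ 4 := by
            apply hcop.dvd_of_dvd_mul_left
            rw [mul_pow] at hc_dvd
            exact hc_dvd
          obtain ⟨k, hk, hc_eq⟩ := monic_eq_prime_pow hc_monic hq_monic hq_prime hcq
          have hk2 : k = 2 := by
            have := hc_deg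
            rw [hc_eq, natDegree_pow, hq_nat] at this
            omega
          rw [hk2] at hc_eq
          exact ⟨h3F, hnroot, hc_eq, hm_eq⟩
        · exact absurd hm_eq hmne1
        · -- minpoly = (X-1) * q
          right; right
          obtain ⟨a, ha, b, hb, hc_eq⟩ := split2 hc_monic hX1m hq_monic hX1p hq_prime
            (by rwa [mul_pow] at hc_dvd)
          have hqc : q ∣ g.charpoly := dvd_trans (dvd_mul_left q (X - C 1)) (hm_eq ▸ hmc)
          have hb1 : 1 ≤ b := by
            rcases Nat.eq_zero_or_pos b with h0 | h
            · exfalso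
              rw [h0, pow_zero, mul_one] at hc_eq
              rw [hc_eq] at hqc
              have := hq_prime.dvd_of_dvd_pow hqc
              have hd := Polynomial.natDegree_le_of_dvd this (X_sub_C_ne_zero 1)
              rw [hq_nat, natDegree_X_sub_C] at hd
              omega
            · exact h
          have ha1 : 1 ≤ a := by
            rcases Nat.eq_zero_or_pos a with h0 | h
            · exfalso
              have hxc : (X - C (1:F)) ∣ g.charpoly :=
                dvd_trans (dvd_mul_right (X - C 1) q) (hm_eq ▸ hmc)
              rw [hc_eq, h0, pow_zero, one_mul] at hxc
              exact hqnd1 (hX1p.dvd_of_dvd_pow hxc)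
            · exact h
          have hdeg : a + 2 * b = 4 := by
            have := hc_deg
            rw [hc_eq, natDegree_mul (pow_ne_zero _ (X_sub_C_ne_zero 1))
              (pow_ne_zero _ hq_ne), natDegree_pow, natDegree_pow, natDegree_X_sub_C,
              hq_nat, mul_one] at this
            omega
          have hab : a = 2 ∧ b = 1 := by omega
          rw [hab.1, hab.2, pow_one] at hc_eq
          have hroot : g.charpoly.IsRoot 1 := by
            rw [hc_eq]
            simp [IsRoot]
          exact ⟨h3F, hroot, by rwa [hX1] at hc_eq, by rwa [hX1] at hm_eq⟩
      · -- q reducible: q = (X - ω)(X - ω')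
        obtain ⟨c₁, c₂, hcc0, hcc1⟩ :=
          (hq_monic.not_irreducible_iff_exists_add_mul_eq_coeff hq_nat).mp hq_irr
        have hq0 : q.coeff 0 = 1 := by rw [hqdef]; simp
        have hq1 : q.coeff 1 = 1 := by
          rw [hqdef]
          simp [coeff_one, coeff_X, coeff_X_pow]
        rw [hq0] at hcc0
        rw [hq1] at hcc1
        set ω : F := -c₁ with hωdef
        set ω' : F := -c₂ with hω'def
        have hprod : ω * ω' = 1 := by rw [hωdef, hω'def]; linear_combination -hcc0
        have hsum : ω + ω' = -1 := by rw [hωdef, hω'def]; linear_combination hcc1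
        have hCsum : (C ω + C ω' : F[X]) = -1 := by
          rw [← C_add, hsum]; simp
        have hCprod : (C ω * C ω' : F[X]) = 1 := by
          rw [← C_mul, hprod]; simp
        have hfact : q = (X - C ω) * (X - C ω') := by
          rw [hqdef]
          linear_combination (X : F[X]) * hCsum - hCprod
        have hω_root : ω ^ 2 + ω + 1 = 0 := by
          have h := congrArg (eval ω) hfact
          simpa [hqdef] using h
        have hω'_root : ω' ^ 2 + ω' + 1 = 0 := by
          have h := congrArg (eval ω') hfact
          simpa [hqdef] using h
        have hω3 : ω ^ 3 = 1 := by linear_combination (ω - 1) * hω_root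
        have hω'3 : ω' ^ 3 = 1 := by linear_combination (ω' - 1) * hω'_root
        have hω1 : ω ≠ 1 := by
          intro h
          apply h3F
          rw [h] at hω_root
          linear_combination hω_root
        have hω'1 : ω' ≠ 1 := by
          intro h
          apply h3F
          rw [h] at hω'_root
          linear_combination hω'_root
        have hsq : ω' = ω ^ 2 := by linear_combination hsum - hω_root
        have hωω' : ω ≠ ω' := by
          intro h
          apply hω1
          rw [← h] at hprod
          have h2 : ω ^ 2 = 1 := by rw [pow_two]; exact hprod
          calc ω = ω * ω ^ 2 := by rw [h2, mul_one]
          _ = ω ^ 3 := by ring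
          _ = 1 := hω3
        have hsq' : ω = ω' ^ 2 := by
          rw [hsq]
          calc ω = ω * ω ^ 3 := by rw [hω3, mul_one]
          _ = (ω ^ 2) ^ 2 := by ring
        have hω2ne1 : ω ^ 2 ≠ 1 := by
          intro h2
          apply hω1
          calc ω = ω * ω ^ 2 := by rw [h2, mul_one]
          _ = ω ^ 3 := by ring
          _ = 1 := hω3
        have hω'2ne1 : ω' ^ 2 ≠ 1 := by
          intro h2
          apply hω'1
          calc ω' = ω' * ω' ^ 2 := by rw [h2, mul_one]
          _ = ω' ^ 3 := by ring
          _ = 1 := hω'3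
        have h1ω : (1:F) ≠ ω := fun h => hω1 h.symm
        have hωm : (X - C ω).Monic := monic_X_sub_C ω
        have hω'm : (X - C ω').Monic := monic_X_sub_C ω'
        have hωp : Prime (X - C ω) := prime_X_sub_C ω
        have hω'p : Prime (X - C ω') := prime_X_sub_C ω'
        -- distinctness of linear factors as polynomials
        have hdist1 : ¬ (X - C ω) ∣ (X - C (1:F)) := by
          intro h
          have := dvd_iff_isRoot.mp h
          simp only [IsRoot, eval_sub, eval_X, eval_C] at this
          exact hω1 (by linear_combination this)
        have hdist1' : ¬ (X - C ω') ∣ (X - C (1:F)) := by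
          intro h
          have := dvd_iff_isRoot.mp h
          simp only [IsRoot, eval_sub, eval_X, eval_C] at this
          exact hω'1 (by linear_combination this)
        have hdist2 : ¬ (X - C ω) ∣ (X - C ω') := by
          intro h
          have := dvd_iff_isRoot.mp h
          simp only [IsRoot, eval_sub, eval_X, eval_C] at this
          exact hωω' (by linear_combination this)
        have hdist2' : ¬ (X - C ω') ∣ (X - C ω) := by
          intro h
          have := dvd_iff_isRoot.mp h
          simp only [IsRoot, eval_sub, eval_X, eval_C] at this
          exact hωω' (by linear_combination -this)
        have hm_dvd3 : minpoly F g ∣ (X - C 1) ^ 1 * ((X - C ω) ^ 1 * (X - C ω') ^ 1) := by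
          simp only [pow_one]
          rw [← hfact]
          exact hm_dvd
        obtain ⟨a, ha, b, hb, e, he, hm_eq⟩ :=
          split3 hm_monic hX1m hωm hω'm hX1p hωp hω'p hm_dvd3
        have hc_dvd3 : g.charpoly ∣
            (X - C 1) ^ 4 * ((X - C ω) ^ 4 * (X - C ω') ^ 4) := by
          have h := hc_dvd
          rw [hfact, mul_pow, mul_pow] at h
          exact h
        -- helper for the scalar cases
        have hscalar : ∀ t : F, t ^ 3 = 1 → minpoly F g = X - C t → t = 1 := by
          intro t ht3 hmt
          have ha' := minpoly.aeval F g
          rw [hmt] at ha'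
          simp only [_root_.map_sub, aeval_X, aeval_C] at ha'
          have hgt : g = algebraMap F (Matrix (Fin 2 ⊕ Fin 2) (Fin 2 ⊕ Fin 2) F) t :=
            sub_eq_zero.mp ha'
          have hd : g.det = t ^ 4 := by
            rw [hgt, Algebra.algebraMap_eq_smul_one, Matrix.det_smul, Matrix.det_one, mul_one]
            norm_num
          rw [hdet1] at hd
          have : t ^ 4 = t := by
            calc t ^ 4 = t ^ 3 * t := by ring
            _ = t := by rw [ht3, one_mul]
          rw [this] at hd
          exact hd.symm
        -- helper for pair cases
        have hpair : ∀ t : F, t ^ 3 = 1 → t ≠ 1 →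
            minpoly F g = (X - C 1) * (X - C t) → False := by
          intro t ht3 ht1 hmt
          have ha' := minpoly.aeval F g
          rw [hmt] at ha'
          simp only [_root_.map_mul, _root_.map_sub, aeval_X, aeval_C] at ha'
          apply excl_pair g hg t ht3 ht1 hne
          have : (g - algebraMap F (Matrix (Fin 2 ⊕ Fin 2) (Fin 2 ⊕ Fin 2) F) 1) *
              (g - algebraMap F (Matrix (Fin 2 ⊕ Fin 2) (Fin 2 ⊕ Fin 2) F) t) = 0 := ha'
          simpa using this
        have hkey : ∀ (x y : F) (a b : ℕ), (-x) ^ a * (-y) ^ b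
            = (-1:F) ^ (a + b) * (x ^ a * y ^ b) := by
          intro x y a b
          rw [pow_add]
          calc (-x) ^ a * (-y) ^ b = ((-1:F) ^ a * x ^ a) * ((-1:F) ^ b * y ^ b) := by
                rw [← neg_one_mul x, ← neg_one_mul y, mul_pow, mul_pow]
          _ = ((-1:F) ^ a * (-1:F) ^ b) * (x ^ a * y ^ b) := mul_mul_mul_comm _ _ _ _
        interval_cases a <;> interval_cases b <;> interval_cases e <;>
          simp only [pow_zero, pow_one, one_mul, mul_one] at hm_eq
        · -- m = 1
          rw [hm_eq] at hm_pos; simp at hm_pos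
        · -- m = X - Cω'
          exact absurd (hscalar ω' hω'3 hm_eq) hω'1
        · -- m = X - Cω
          exact absurd (hscalar ω hω3 hm_eq) hω1
        · -- m = (X-Cω)(X-Cω') = q
          right; left
          have hmq : minpoly F g = q := by rw [hm_eq, ← hfact]
          have hq_g : g ^ 2 + g + 1 = 0 := by
            have ha' := minpoly.aeval F g
            rw [hmq, hqdef] at ha'
            simpa [map_pow] using ha'
          have hnroot := no_root_one g h3F hq_g
          have hnd : ¬ (X - C (1:F)) ∣ g.charpoly := fun h => hnroot (dvd_iff_isRoot.mp h)
          have hcop : IsCoprime g.charpoly ((X - C (1:F)) ^ 4) :=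
            ((hX1p.coprime_iff_not_dvd.mpr hnd).symm).pow_right
          have hcq : g.charpoly ∣ (X - C ω) ^ 4 * (X - C ω') ^ 4 :=
            hcop.dvd_of_dvd_mul_left hc_dvd3
          obtain ⟨a', ha', b', hb', hc_eq⟩ := split2 hc_monic hωm hω'm hωp hω'p hcq
          have hdeg : a' + b' = 4 := by
            have := hc_deg
            rw [hc_eq, natDegree_mul (pow_ne_zero _ (X_sub_C_ne_zero ω))
              (pow_ne_zero _ (X_sub_C_ne_zero ω')), natDegree_pow, natDegree_pow,
              natDegree_X_sub_C, natDegree_X_sub_C] at this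
            omega
          have ha1 : 1 ≤ a' := by
            rcases Nat.eq_zero_or_pos a' with h0 | h
            · exfalso
              have hxc : (X - C ω) ∣ g.charpoly :=
                dvd_trans (by rw [hm_eq]; exact dvd_mul_right _ _) hmc
              rw [hc_eq, h0, pow_zero, one_mul] at hxc
              exact hdist2 (hωp.dvd_of_dvd_pow hxc)
            · exact h
          have hb1 : 1 ≤ b' := by
            rcases Nat.eq_zero_or_pos b' with h0 | h
            · exfalso
              have hxc : (X - C ω') ∣ g.charpoly :=
                dvd_trans (by rw [hm_eq]; exact dvd_mul_left _ _) hmc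
              rw [hc_eq, h0, pow_zero, mul_one] at hxc
              exact hdist2' (hω'p.dvd_of_dvd_pow hxc)
            · exact h
          -- use determinant to pin down exponents
          have hev : g.charpoly.coeff 0 = (-ω) ^ a' * (-ω') ^ b' := by
            rw [coeff_zero_eq_eval_zero, hc_eq]
            simp [eval_pow, zero_sub]
          rw [hcoeff0] at hev
          have hev' : ω ^ a' * ω' ^ b' = 1 := by
            have hsign : ((-1:F)) ^ (a' + b') = 1 := by rw [hdeg]; norm_num
            rw [hkey ω ω' a' b', hsign, one_mul] at hev
            exact hev.symm
          have hab : a' = 2 ∧ b' = 2 := by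
            have hcases : (a' = 1 ∧ b' = 3) ∨ (a' = 2 ∧ b' = 2) ∨ (a' = 3 ∧ b' = 1) := by omega
            rcases hcases with ⟨h1, h2⟩ | h | ⟨h1, h2⟩
            · exfalso
              rw [h1, h2, hsq] at hev'
              apply hω1
              calc ω = ω ^ 1 * (ω ^ 2) ^ 3 := by
                    rw [show ((ω ^ 2) ^ 3 : F) = (ω ^ 3) ^ 2 by ring, hω3]; ring
              _ = 1 := hev'
            · exact h
            · exfalso
              rw [h1, h2, hsq] at hev'
              apply hω2ne1
              calc ω ^ 2 = ω ^ 3 * ω ^ 2 := by rw [hω3, one_mul]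
              _ = ω ^ 3 * (ω ^ 2) ^ 1 := by ring
              _ = 1 := hev'
          rw [hab.1, hab.2] at hc_eq
          have hcq2 : g.charpoly = q ^ 2 := by rw [hc_eq, hfact]; ring
          exact ⟨h3F, hnroot, hcq2, hmq⟩
        · -- m = X - C 1
          exact absurd hm_eq hmne1
        · -- m = (X - C 1)(X - C ω')
          exact absurd (hpair ω' hω'3 hω'1 hm_eq) (fun h => h)
        · -- m = (X - C 1)(X - C ω)
          exact absurd (hpair ω hω3 hω1 hm_eq) (fun h => h)
        · -- m = (X-1) q : the root case
          right; right
          have hmq : minpoly F g = (X - 1) * q := by rw [hm_eq, hfact, hX1]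
          have hdist0 : ¬ (X - C (1:F)) ∣ (X - C ω) := by
            intro h
            have := dvd_iff_isRoot.mp h
            simp only [IsRoot, eval_sub, eval_X, eval_C] at this
            exact hω1 (show ω = 1 by linear_combination -this)
          have hdist0' : ¬ (X - C (1:F)) ∣ (X - C ω') := by
            intro h
            have := dvd_iff_isRoot.mp h
            simp only [IsRoot, eval_sub, eval_X, eval_C] at this
            exact hω'1 (show ω' = 1 by linear_combination -this)
          obtain ⟨a', ha', b', hb', e', he', hc_eq⟩ :=
            split3 hc_monic hX1m hωm hω'm hX1p hωp hω'p hc_dvd3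
          have hdeg : a' + b' + e' = 4 := by
            have := hc_deg
            rw [hc_eq, natDegree_mul (pow_ne_zero _ (X_sub_C_ne_zero 1))
                (mul_ne_zero (pow_ne_zero _ (X_sub_C_ne_zero ω))
                  (pow_ne_zero _ (X_sub_C_ne_zero ω'))),
              natDegree_mul (pow_ne_zero _ (X_sub_C_ne_zero ω))
                (pow_ne_zero _ (X_sub_C_ne_zero ω')),
              natDegree_pow, natDegree_pow, natDegree_pow,
              natDegree_X_sub_C, natDegree_X_sub_C, natDegree_X_sub_C] at this
            omega
          have ha1 : 1 ≤ a' := by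
            rcases Nat.eq_zero_or_pos a' with h0 | h
            · exfalso
              have hxc : (X - C (1:F)) ∣ g.charpoly :=
                dvd_trans (by rw [hm_eq]; exact dvd_mul_right _ _) hmc
              rw [hc_eq, h0, pow_zero, one_mul] at hxc
              rcases (hX1p.dvd_mul).mp hxc with h' | h'
              · exact hdist0 (hX1p.dvd_of_dvd_pow h')
              · exact hdist0' (hX1p.dvd_of_dvd_pow h')
            · exact h
          have hb1 : 1 ≤ b' := by
            rcases Nat.eq_zero_or_pos b' with h0 | h
            · exfalso
              have hxc : (X - C ω) ∣ g.charpoly :=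
                dvd_trans (by rw [hm_eq]; exact Dvd.dvd.mul_left (dvd_mul_right _ _) _) hmc
              rw [hc_eq, h0, pow_zero, one_mul] at hxc
              rcases (hωp.dvd_mul).mp hxc with h' | h'
              · exact hdist1 (hωp.dvd_of_dvd_pow h')
              · exact hdist2 (hωp.dvd_of_dvd_pow h')
            · exact h
          have he1 : 1 ≤ e' := by
            rcases Nat.eq_zero_or_pos e' with h0 | h
            · exfalso
              have hxc : (X - C ω') ∣ g.charpoly :=
                dvd_trans (by rw [hm_eq]; exact Dvd.dvd.mul_left (dvd_mul_left _ _) _) hmc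
              rw [hc_eq, h0, pow_zero, mul_one] at hxc
              rcases (hω'p.dvd_mul).mp hxc with h' | h'
              · exact hdist1' (hω'p.dvd_of_dvd_pow h')
              · exact hdist2' (hω'p.dvd_of_dvd_pow h')
            · exact h
          have hev : g.charpoly.coeff 0 = (-1) ^ a' * ((-ω) ^ b' * (-ω') ^ e') := by
            rw [coeff_zero_eq_eval_zero, hc_eq]
            simp [eval_pow, zero_sub]
          rw [hcoeff0] at hev
          have hev' : ω ^ b' * ω' ^ e' = 1 := by
            have hsign : ((-1:F)) ^ (a' + b' + e') = 1 := by rw [hdeg]; norm_num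
            have hre : ((-1:F)) ^ a' * ((-ω) ^ b' * (-ω') ^ e')
                = ((-1:F)) ^ (a' + b' + e') * (ω ^ b' * ω' ^ e') := by
              rw [hkey ω ω' b' e', ← mul_assoc, ← pow_add, ← add_assoc]
            rw [hre, hsign, one_mul] at hev
            exact hev.symm
          have habe : a' = 2 ∧ b' = 1 ∧ e' = 1 := by
            have hcases : (a' = 2 ∧ b' = 1 ∧ e' = 1) ∨ (a' = 1 ∧ b' = 2 ∧ e' = 1)
                ∨ (a' = 1 ∧ b' = 1 ∧ e' = 2) := by omega
            rcases hcases with h | ⟨h1, h2, h3'⟩ | ⟨h1, h2, h3'⟩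
            · exact h
            · exfalso
              rw [h2, h3', hsq] at hev'
              apply hω1
              calc ω = ω ^ 2 * (ω ^ 2) ^ 1 := by
                    rw [show (ω ^ 2 * (ω ^ 2) ^ 1 : F) = ω ^ 3 * ω by ring, hω3, one_mul]
              _ = 1 := hev'
            · exfalso
              rw [h2, h3', hsq] at hev'
              apply hω2ne1
              calc ω ^ 2 = ω ^ 1 * (ω ^ 2) ^ 2 := by
                    rw [show (ω ^ 1 * (ω ^ 2) ^ 2 : F) = ω ^ 3 * ω ^ 2 by ring, hω3, one_mul]
              _ = 1 := hev'
          rw [habe.1, habe.2.1, habe.2.2, pow_one, pow_one] at hc_eq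
          have hc_eq' : g.charpoly = (X - 1) ^ 2 * q := by
            rw [hc_eq, hfact, hX1]
          have hroot : g.charpoly.IsRoot 1 := by
            rw [hc_eq']
            simp [IsRoot]
          exact ⟨h3F, hroot, hc_eq', hmq⟩
  -- final assembly
  have hchar : ringChar F = 3 ↔ (3:F) = 0 := by
    constructor
    · intro h
      have h' : ((ringChar F : ℕ) : F) = 0 := ringChar.Nat.cast_ringChar
      rw [h] at h'
      exact_mod_cast h'
    · intro h
      have h' : ((3:ℕ):F) = 0 := by exact_mod_cast h
      exact CharP.ringChar_of_prime_eq_zero Nat.prime_three h'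
  constructor
  · intro hyp
    rcases main with ⟨h3F, hc, hm⟩ | ⟨h3F, hroot, hc, hm⟩ | ⟨h3F, hroot, hc, hm⟩
    · exact ⟨hc, hm⟩
    · exact ⟨hc, hm⟩
    · rcases hyp with hh | hh
      · exact absurd (hchar.mp hh) h3F
      · exact absurd hroot hh
  · rintro ⟨hring, hroot⟩
    rcases main with ⟨h3F, hc, hm⟩ | ⟨h3F, hnroot, hc, hm⟩ | ⟨h3F, _, hc, hm⟩
    · exact absurd (hchar.mpr h3F) hring
    · exact absurd hroot hnroot
    · exact ⟨hc, hm⟩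
end

section
/- Let c be a positive integer and ζ = e^{2πi/c}. For i, j ∈ ℤ/cℤ let Θ_c^{i,j} ∈ ℤ[T] be the minimal polynomial over ℚ of ζ^i + ζ^{−i} + ζ^j + ζ^{−j}, and set Θ_c = lcm of all Θ_c^{i,j}. Then for every field F and every g ∈ Sp₄(F) of order dividing c, Θ_c(tr g) = 0 in F. -/
open Polynomial

section ThetaHelpers

open Matrix

lemma pf_det {R : Type*} [CommRing R] (N : Matrix (Fin 4) (Fin 4) R)
    (B : Fin 4 → Fin 4 → R)
    (hB : ∀ x y, B x y = N x 2 * N y 0 - N x 0 * N y 2 + N x 3 * N y 1 - N x 1 * N y 3) :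
    B 0 1 * B 2 3 - B 0 2 * B 1 3 + B 0 3 * B 1 2 = -N.det := by
  simp only [hB]
  simp [Matrix.det_succ_row_zero, Fin.sum_univ_succ]
  simp only [show (Fin.succ 2 : Fin 4) = 3 from rfl,
    show ((1:Fin 4).succAbove 2) = 3 from by decide,
    show ((2:Fin 4).succAbove 2) = 3 from by decide,
    show (Fin.castSucc 2 : Fin 4) = 2 from by decide,
    show ((3:Fin 4).succAbove 2) = 2 from by decide]
  ring

lemma sp_det_eq_one {R : Type*} [CommRing R] (A : Matrix (Fin 2 ⊕ Fin 2) (Fin 2 ⊕ Fin 2) R)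
    (hA : A ∈ Matrix.symplecticGroup (Fin 2) R) : A.det = 1 := by
  rw [SymplecticGroup.mem_iff] at hA
  set e : Fin 4 ≃ (Fin 2 ⊕ Fin 2) := (finSumFinEquiv (m := 2) (n := 2)).symm with he
  have e0 : e 0 = Sum.inl 0 := by decide
  have e1 : e 1 = Sum.inl 1 := by decide
  have e2 : e 2 = Sum.inr 0 := by decide
  have e3 : e 3 = Sum.inr 1 := by decide
  set N := A.submatrix e e with hN
  have hdet : N.det = A.det := Matrix.det_submatrix_equiv_self e A
  set B : Fin 4 → Fin 4 → R := fun x y => (A * J (Fin 2) R * Aᵀ) (e x) (e y) with hBdef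
  have hB : ∀ x y, B x y = N x 2 * N y 0 - N x 0 * N y 2 + N x 3 * N y 1 - N x 1 * N y 3 := by
    intro x y
    simp only [hBdef, hN, Matrix.submatrix_apply, e0, e1, e2, e3, Matrix.mul_apply, Matrix.J,
      Matrix.fromBlocks_apply₁₁, Matrix.fromBlocks_apply₁₂, Matrix.fromBlocks_apply₂₁,
      Matrix.fromBlocks_apply₂₂, Fintype.sum_sum_type, Fin.sum_univ_two,
      Matrix.transpose_apply, Matrix.one_apply, Matrix.zero_apply, Matrix.neg_apply]
    norm_num
    cases' (e x) with u u <;> cases' (e y) with v v <;> ring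
  have key := pf_det N B hB
  rw [hdet] at key
  have hJpf : B 0 1 * B 2 3 - B 0 2 * B 1 3 + B 0 3 * B 1 2 = -1 := by
    simp only [hBdef, hA, e0, e1, e2, e3]
    simp [Matrix.J, Matrix.fromBlocks_apply₁₁, Matrix.fromBlocks_apply₁₂,
      Matrix.fromBlocks_apply₂₁, Matrix.fromBlocks_apply₂₂, Matrix.one_apply]
  rw [key] at hJpf
  exact neg_inj.mp hJpf

lemma charpoly_transpose' {K : Type*} [CommRing K] {n : Type*} [DecidableEq n] [Fintype n]
    (A : Matrix n n K) : (Aᵀ).charpoly = A.charpoly := by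
  have h : charmatrix (Aᵀ) = (charmatrix A)ᵀ := by
    ext i j
    simp only [charmatrix_apply, Matrix.transpose_apply, Matrix.diagonal_apply]
    by_cases hij : i = j
    · subst hij; rfl
    · rw [if_neg hij, if_neg (Ne.symm hij)]
  rw [Matrix.charpoly, h, Matrix.det_transpose, Matrix.charpoly]

lemma charpoly_conj_one {K : Type*} [CommRing K] {n : Type*} [DecidableEq n] [Fintype n]
    (P Q N : Matrix n n K) (hPQ : P * Q = 1) : (P * N * Q).charpoly = N.charpoly := by
  have hPQ' : P.map (C : K →+* K[X]) * Q.map C = 1 := by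
    rw [← Matrix.map_mul, hPQ, Matrix.map_one _ (map_zero C) (map_one C)]
  have hQP' : Q.map (C : K →+* K[X]) * P.map C = 1 := mul_eq_one_comm.mp hPQ'
  have hcm : charmatrix (P * N * Q) = P.map C * charmatrix N * Q.map C := by
    have hsc : P.map (C : K →+* K[X]) * Matrix.scalar n (X : K[X])
        = Matrix.scalar n (X : K[X]) * P.map C :=
      (Matrix.scalar_commute (X : K[X]) (fun r' => Commute.all _ _) (P.map C)).symm
    have hch : ∀ M : Matrix n n K, charmatrix M = Matrix.scalar n (X : K[X]) - M.map C :=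
      fun M => rfl
    rw [hch, hch, Matrix.mul_sub, Matrix.sub_mul]
    congr 1
    · rw [hsc, Matrix.mul_assoc, hPQ', Matrix.mul_one]
    · rw [← Matrix.map_mul, ← Matrix.map_mul]
  rw [Matrix.charpoly, hcm, Matrix.det_mul, Matrix.det_mul, mul_comm, ← mul_assoc,
    ← Matrix.det_mul, hQP', Matrix.det_one, one_mul, Matrix.charpoly]

lemma sp_charpoly_palindrome {K : Type*} [Field K]
    (A : Matrix (Fin 2 ⊕ Fin 2) (Fin 2 ⊕ Fin 2) K) (hA : A ∈ Matrix.symplecticGroup (Fin 2) K)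
    (hdet : A.det = 1) : A.charpoly.reverse = A.charpoly := by
  set Jm := J (Fin 2) K with hJ
  set B := Jm * Aᵀ * (-Jm) with hBdef
  have hBA : B * A = 1 := by
    have := SymplecticGroup.inv_left_mul_aux hA
    calc B * A = -(Jm * Aᵀ * Jm * A) := by rw [hBdef]; noncomm_ring
    _ = 1 := this
  have hAB : A * B = 1 := mul_eq_one_comm.mp hBA
  have hBcp : B.charpoly = A.charpoly := by
    have h1 : Jm * (-Jm) = 1 := by
      rw [Matrix.mul_neg, hJ, Matrix.J_squared]; simp
    rw [hBdef, charpoly_conj_one _ _ _ h1, charpoly_transpose']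
  have key : (1 : Matrix _ _ K[X]) - (X : K[X]) • A.map C = A.map C * (B.map C - (X:K[X]) • 1) := by
    rw [Matrix.mul_sub, ← Matrix.map_mul, hAB, Matrix.map_one _ (map_zero C) (map_one C),
      Matrix.mul_smul, Matrix.mul_one]
  rw [Matrix.reverse_charpoly, Matrix.charpolyRev, key, Matrix.det_mul]
  have hdetA : (A.map (C : K →+* K[X])).det = 1 := by
    rw [show A.map (C : K →+* K[X]) = (C : K →+* K[X]).mapMatrix A from rfl, ← RingHom.map_det, hdet, _root_.map_one]
  rw [hdetA, one_mul]
  have h2 : B.map (C : K →+* K[X]) - (X:K[X]) • 1 = -(charmatrix B) := by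
    have hch : charmatrix B = Matrix.scalar _ (X : K[X]) - B.map C := rfl
    rw [hch, Matrix.scalar_apply, ← Matrix.smul_one_eq_diagonal]
    abel
  rw [h2, Matrix.det_neg, ← Matrix.charpoly, hBcp]
  norm_num

lemma quartic_pal_factor {K : Type*} [Field K] [IsAlgClosed K] (p : K[X])
    (hm : p.Monic) (hd : p.natDegree = 4) (h0 : p.coeff 0 = 1) (h13 : p.coeff 1 = p.coeff 3) :
    ∃ a b : K, a ≠ 0 ∧ b ≠ 0 ∧ p.IsRoot a ∧ p.IsRoot b ∧
      a + a⁻¹ + b + b⁻¹ = -(p.coeff 3) := by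
  set e := p.coeff 3 with he
  set f := p.coeff 2 with hf
  obtain ⟨s, hs⟩ : ∃ s : K, (X^2 + C e * X + C (f - 2)).IsRoot s := by
    apply IsAlgClosed.exists_root
    have : (X^2 + C e * X + C (f - 2) : K[X]).degree = 2 := by compute_degree!
    rw [this]; decide
  have hs' : s^2 + e*s + (f - 2) = 0 := by
    simpa [IsRoot, eval_add, eval_mul, eval_pow] using hs
  set t := -e - s with ht
  have h4 : p.coeff 4 = 1 := by
    have := hm.coeff_natDegree; rwa [hd] at this
  have hps : p = ∑ i ∈ Finset.range 5, C (p.coeff i) * X ^ i := by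
    simpa only [← Polynomial.C_mul_X_pow_eq_monomial] using p.as_sum_range' 5 (by omega)
  have hfact : p = (X^2 - C s * X + 1) * (X^2 - C t * X + 1) := by
    rw [hps]
    simp only [Finset.sum_range_succ, Finset.sum_range_zero, zero_add, h4, h13, h0, ← he, ← hf, Polynomial.C_1]
    have hC : C s^2 + C e * C s + (C f - 2) = 0 := by
      have := congrArg (C : K →+* K[X]) hs'
      push_cast at this
      simpa [_root_.map_add, _root_.map_mul, _root_.map_pow, _root_.map_sub, map_ofNat] using this
    have hCt : C t = -C e - C s := by rw [ht]; simp [map_sub, map_neg]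
    rw [hCt]
    linear_combination (X:K[X])^2 * hC
  obtain ⟨a, ha⟩ : ∃ a : K, (X^2 - C s * X + 1).IsRoot a := by
    apply IsAlgClosed.exists_root
    have : (X^2 - C s * X + 1 : K[X]).degree = 2 := by compute_degree!
    rw [this]; decide
  obtain ⟨b, hb⟩ : ∃ b : K, (X^2 - C t * X + 1).IsRoot b := by
    apply IsAlgClosed.exists_root
    have : (X^2 - C t * X + 1 : K[X]).degree = 2 := by compute_degree!
    rw [this]; decide
  have ha' : a^2 - s*a + 1 = 0 := by simpa [IsRoot] using ha
  have hb' : b^2 - t*b + 1 = 0 := by simpa [IsRoot] using hb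
  have ha0 : a ≠ 0 := by rintro rfl; simp at ha'
  have hb0 : b ≠ 0 := by rintro rfl; simp at hb'
  have hainv : a⁻¹ = s - a := inv_eq_of_mul_eq_one_right (by linear_combination -ha')
  have hbinv : b⁻¹ = t - b := inv_eq_of_mul_eq_one_right (by linear_combination -hb')
  refine ⟨a, b, ha0, hb0, ?_, ?_, ?_⟩
  · rw [IsRoot.def, hfact, eval_mul]
    rw [IsRoot.def] at ha
    rw [ha, zero_mul]
  · rw [IsRoot.def, hfact, eval_mul]
    rw [IsRoot.def] at hb
    rw [hb, mul_zero]
  · rw [hainv, hbinv, ht]; ring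

lemma charpoly_root_pow_eq_one {K : Type*} [Field K] {n : Type*} [DecidableEq n] [Fintype n]
    (M : Matrix n n K) {c : ℕ} (hM : M ^ c = 1) {a : K} (ha : M.charpoly.IsRoot a) :
    a ^ c = 1 := by
  have hdet : (a • (1 : Matrix n n K) - M).det = 0 := by
    have h1 : (Polynomial.evalRingHom a) (Matrix.charmatrix M).det = 0 := by
      rw [← Matrix.charpoly]
      simpa [IsRoot.def, coe_evalRingHom] using ha
    rw [RingHom.map_det] at h1
    have h2 : (Polynomial.evalRingHom a).mapMatrix (Matrix.charmatrix M)
        = a • (1 : Matrix n n K) - M := by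
      ext i j
      by_cases hij : i = j
      · subst hij
        simp [Matrix.charmatrix_apply_eq, Matrix.sub_apply, Matrix.smul_apply, Matrix.one_apply]
      · simp [Matrix.charmatrix_apply_ne _ _ _ hij, Matrix.sub_apply, Matrix.smul_apply,
          Matrix.one_apply_ne hij]
    rwa [h2] at h1
  obtain ⟨v, hv0, hv⟩ := (Matrix.exists_mulVec_eq_zero_iff).mpr hdet
  have hMv : M *ᵥ v = a • v := by
    have := hv
    rw [Matrix.sub_mulVec, Matrix.smul_mulVec, Matrix.one_mulVec, sub_eq_zero] at this
    exact this.symm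
  have hpow : ∀ k : ℕ, (M ^ k) *ᵥ v = a ^ k • v := by
    intro k
    induction k with
    | zero => simp
    | succ k ih =>
      rw [pow_succ, ← Matrix.mulVec_mulVec, hMv, Matrix.mulVec_smul, ih, pow_succ]
      rw [smul_smul, mul_comm]
  have hv1 : v = a ^ c • v := by
    have := hpow c
    rwa [hM, Matrix.one_mulVec] at this
  obtain ⟨i, hi⟩ := Function.ne_iff.mp hv0
  have : v i = a ^ c * v i := congrFun hv1 i
  have hsimp : v i ≠ 0 := by simpa using hi
  field_simp at this
  tauto

lemma exists_prim {K : Type*} [Field K] [IsAlgClosed K] {d : ℕ} (hd : 0 < d)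
    [NeZero (d : K)] : ∃ η : K, IsPrimitiveRoot η d := by
  obtain ⟨η, hη⟩ : ∃ η : K, (Polynomial.cyclotomic d K).IsRoot η := by
    apply IsAlgClosed.exists_root
    rw [Polynomial.degree_cyclotomic]
    simpa using (Nat.totient_pos.mpr hd).ne'
  exact ⟨η, (Polynomial.isRoot_cyclotomic_iff).mp hη⟩

lemma exists_eta {K : Type*} [Field K] [IsAlgClosed K] {c : ℕ} (hc : 0 < c) :
    ∃ η : K, η ^ c = 1 ∧ (Polynomial.cyclotomic c K).IsRoot η ∧
      ∀ x : K, x ^ c = 1 → ∃ m : ℕ, x = η ^ m := by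
  by_cases h : (c : K) = 0
  · -- positive characteristic dividing c
    haveI := ringChar.charP K
    set p := ringChar K with hp
    have hpc : p ∣ c := (CharP.cast_eq_zero_iff K p c).mp h
    have hpprime : p.Prime := by
      rcases CharP.char_is_prime_or_zero K p with h' | h'
      · exact h'
      · exfalso; rw [h'] at hpc; omega
    haveI : Fact p.Prime := ⟨hpprime⟩
    set k := c.factorization p with hk
    have hkpos : 0 < k := hpprime.factorization_pos_of_dvd hc.ne' hpc
    set c' := c / p ^ k with hc'
    have hccc : p ^ k * c' = c := Nat.ordProj_mul_ordCompl_eq_self c p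
    have hc'pos : 0 < c' := Nat.ordCompl_pos p hc.ne'
    have hpc' : ¬ p ∣ c' := Nat.not_dvd_ordCompl hpprime hc.ne'
    haveI : NeZero (c' : K) := ⟨fun h' => hpc' ((CharP.cast_eq_zero_iff K p c').mp h')⟩
    obtain ⟨η, hη⟩ := exists_prim (K := K) hc'pos
    have hη1 : η ^ c' = 1 := hη.pow_eq_one
    refine ⟨η, ?_, ?_, ?_⟩
    · rw [← hccc, mul_comm, pow_mul, hη1, one_pow]
    · rw [← hccc, Polynomial.cyclotomic_mul_prime_pow_eq K hpc' hkpos]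
      rw [Polynomial.IsRoot.def, Polynomial.eval_pow,
        show eval η (cyclotomic c' K) = 0 from hη.isRoot_cyclotomic hc'pos, zero_pow]
      have : p ^ (k-1) < p ^ k := Nat.pow_lt_pow_right hpprime.one_lt (by omega)
      omega
    · intro x hx
      have hy : (x ^ c') ^ (p ^ k) = 1 := by
        rw [← pow_mul, mul_comm, hccc, hx]
      have hy1 : x ^ c' = 1 := by
        have hsub : (x ^ c' - 1) ^ (p ^ k) = 0 := by
          rw [sub_pow_char_pow, hy, one_pow, sub_self]
        have h0 : x ^ c' - 1 = 0 := by
          have hne : p ^ k ≠ 0 := (pow_pos hpprime.pos k).ne'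
          exact pow_eq_zero_iff hne |>.mp hsub
        exact sub_eq_zero.mp h0
      haveI : NeZero c' := ⟨hc'pos.ne'⟩
      obtain ⟨m, _, hm⟩ := hη.eq_pow_of_pow_eq_one hy1
      exact ⟨m, hm.symm⟩
  · haveI : NeZero (c : K) := ⟨h⟩
    obtain ⟨η, hη⟩ := exists_prim (K := K) hc
    refine ⟨η, hη.pow_eq_one, hη.isRoot_cyclotomic hc, ?_⟩
    intro x hx
    haveI : NeZero c := ⟨hc.ne'⟩
    obtain ⟨m, _, hm⟩ := hη.eq_pow_of_pow_eq_one hx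
    exact ⟨m, hm.symm⟩

lemma key_eval {c : ℕ} (hc : 0 < c) (Θ : Polynomial ℤ)
    (hdvd : ∀ i j : ZMod c,
      minpoly ℤ (Complex.exp (2 * Real.pi * Complex.I / c) ^ (i.val : ℤ) +
        Complex.exp (2 * Real.pi * Complex.I / c) ^ (-(i.val : ℤ)) +
        Complex.exp (2 * Real.pi * Complex.I / c) ^ (j.val : ℤ) +
        Complex.exp (2 * Real.pi * Complex.I / c) ^ (-(j.val : ℤ))) ∣ Θ)
    {K : Type*} [Field K] (η : K) (hη1 : η ^ c = 1)
    (hηcyc : (Polynomial.cyclotomic c K).IsRoot η) (i j : ZMod c) :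
    Polynomial.aeval (η ^ i.val + η ^ (c - i.val) + η ^ j.val + η ^ (c - j.val)) Θ = 0 := by
  haveI : NeZero c := ⟨hc.ne'⟩
  set ζ : ℂ := Complex.exp (2 * Real.pi * Complex.I / c) with hζdef
  have hζ : IsPrimitiveRoot ζ c := Complex.isPrimitiveRoot_exp c hc.ne'
  have hχ0 : (Polynomial.cyclotomic c ℤ).eval₂ (Int.castRingHom ℂ) ζ = 0 := by
    rw [Polynomial.eval₂_eq_eval_map, Polynomial.map_cyclotomic_int]
    exact hζ.isRoot_cyclotomic hc
  have hψ0 : (Polynomial.cyclotomic c ℤ).eval₂ (Int.castRingHom K) η = 0 := by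
    rw [Polynomial.eval₂_eq_eval_map, Polynomial.map_cyclotomic_int]
    exact hηcyc
  set R := AdjoinRoot (Polynomial.cyclotomic c ℤ) with hR
  set r : R := AdjoinRoot.root _ with hr
  set χ : R →+* ℂ := AdjoinRoot.lift (Int.castRingHom ℂ) ζ hχ0 with hχdef
  set ψ : R →+* K := AdjoinRoot.lift (Int.castRingHom K) η hψ0 with hψdef
  have hχr : χ r = ζ := AdjoinRoot.lift_root hχ0
  have hψr : ψ r = η := AdjoinRoot.lift_root hψ0
  have hrc : r ^ c = 1 := by
    have h1 : AdjoinRoot.mk (Polynomial.cyclotomic c ℤ) (X ^ c - 1) = 0 :=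
      AdjoinRoot.mk_eq_zero.mpr (Polynomial.cyclotomic.dvd_X_pow_sub_one c ℤ)
    rw [_root_.map_sub, _root_.map_pow, AdjoinRoot.mk_X, _root_.map_one, sub_eq_zero] at h1
    exact h1
  have hχinj : Function.Injective χ := by
    rw [injective_iff_map_eq_zero]
    intro x hx
    obtain ⟨P, rfl⟩ := AdjoinRoot.mk_surjective x
    have hev : Polynomial.aeval ζ P = 0 := by
      rwa [Polynomial.aeval_def, algebraMap_int_eq, ← AdjoinRoot.lift_mk (a := ζ) hχ0 P]
    have hPdvd : Polynomial.cyclotomic c ℤ ∣ P := by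
      rw [Polynomial.cyclotomic_eq_minpoly hζ hc]
      exact minpoly.isIntegrallyClosed_dvd (hζ.isIntegral hc) hev
    exact AdjoinRoot.mk_eq_zero.mpr hPdvd
  set γ : R := r ^ i.val + r ^ (c - i.val) + r ^ j.val + r ^ (c - j.val) with hγ
  have hζci : ∀ n : ℕ, n ≤ c → ζ ^ (-(n:ℤ)) = ζ ^ (c - n) := by
    intro n hn
    rw [_root_.zpow_neg, zpow_natCast]
    refine inv_eq_of_mul_eq_one_right ?_
    rw [← pow_add, Nat.add_sub_cancel' hn, hζ.pow_eq_one]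
  have hχγ : χ γ = ζ ^ ((i.val : ℤ)) + ζ ^ (-(i.val : ℤ)) + ζ ^ ((j.val : ℤ)) +
      ζ ^ (-(j.val : ℤ)) := by
    rw [hγ, _root_.map_add, _root_.map_add, _root_.map_add, _root_.map_pow, _root_.map_pow, _root_.map_pow, _root_.map_pow, hχr,
      hζci _ (i.val_lt).le, hζci _ (j.val_lt).le, zpow_natCast, zpow_natCast]
  have hψγ : ψ γ = η ^ i.val + η ^ (c - i.val) + η ^ j.val + η ^ (c - j.val) := by
    rw [hγ, _root_.map_add, _root_.map_add, _root_.map_add, _root_.map_pow, _root_.map_pow, _root_.map_pow, _root_.map_pow, hψr]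
  obtain ⟨q, hq⟩ := hdvd i j
  set f := minpoly ℤ (ζ ^ ((i.val : ℤ)) + ζ ^ (-(i.val : ℤ)) + ζ ^ ((j.val : ℤ)) +
      ζ ^ (-(j.val : ℤ))) with hf
  have hγf : Polynomial.aeval γ f = 0 := by
    apply hχinj
    rw [map_zero]
    show χ.toIntAlgHom ((Polynomial.aeval γ) f) = 0
    rw [← Polynomial.aeval_algHom_apply χ.toIntAlgHom γ f]
    show Polynomial.aeval (χ γ) f = 0
    rw [hχγ, hf]
    exact minpoly.aeval ℤ _
  rw [← hψγ]
  show (Polynomial.aeval (ψ.toIntAlgHom γ)) Θ = 0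
  rw [Polynomial.aeval_algHom_apply ψ.toIntAlgHom γ Θ]
  show ψ (Polynomial.aeval γ Θ) = 0
  rw [hq, _root_.map_mul, hγf, zero_mul, map_zero]

end ThetaHelpers

/-- Let `ζ = e^{2πi/c}` and let `Θ` be the least common multiple over
`i, j ∈ ℤ/cℤ` of the minimal polynomials (over `ℤ`) of
`ζ^i + ζ^{−i} + ζ^j + ζ^{−j}`.  Then for every field `F` and every
`g ∈ Sp₄(F)` of order dividing `c` we have `Θ(tr g) = 0` in `F`. -/
theorem stmt_9 (c : ℕ) (hc : 0 < c) (Θ : Polynomial ℤ)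
    (hdvd : ∀ i j : ZMod c,
      minpoly ℤ (Complex.exp (2 * Real.pi * Complex.I / c) ^ (i.val : ℤ) +
        Complex.exp (2 * Real.pi * Complex.I / c) ^ (-(i.val : ℤ)) +
        Complex.exp (2 * Real.pi * Complex.I / c) ^ (j.val : ℤ) +
        Complex.exp (2 * Real.pi * Complex.I / c) ^ (-(j.val : ℤ))) ∣ Θ)
    (hlcm : ∀ Θ' : Polynomial ℤ, (∀ i j : ZMod c,
      minpoly ℤ (Complex.exp (2 * Real.pi * Complex.I / c) ^ (i.val : ℤ) +
        Complex.exp (2 * Real.pi * Complex.I / c) ^ (-(i.val : ℤ)) +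
        Complex.exp (2 * Real.pi * Complex.I / c) ^ (j.val : ℤ) +
        Complex.exp (2 * Real.pi * Complex.I / c) ^ (-(j.val : ℤ))) ∣ Θ') → Θ ∣ Θ')
    (F : Type*) [Field F] (g : Matrix (Fin 2 ⊕ Fin 2) (Fin 2 ⊕ Fin 2) F)
    (hg : g ∈ Matrix.symplecticGroup (Fin 2) F) (hgc : g ^ c = 1) :
    Polynomial.aeval (Matrix.trace g) Θ = 0 := by
  haveI : NeZero c := ⟨hc.ne'⟩
  set K := AlgebraicClosure F with hK
  set φ : F →+* K := algebraMap F K with hφ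
  set M : Matrix (Fin 2 ⊕ Fin 2) (Fin 2 ⊕ Fin 2) K := g.map φ with hM
  -- M is symplectic
  have hJmap : (Matrix.J (Fin 2) F).map φ = Matrix.J (Fin 2) K := by
    ext i j
    cases i <;> cases j <;>
      simp [Matrix.J, Matrix.one_apply, apply_ite φ]
  have hMsp : M ∈ Matrix.symplecticGroup (Fin 2) K := by
    rw [SymplecticGroup.mem_iff] at hg ⊢
    rw [hM, ← Matrix.transpose_map, ← hJmap, ← Matrix.map_mul, ← Matrix.map_mul, hg]
  have hMc : M ^ c = 1 := by
    have : (φ.mapMatrix g) ^ c = φ.mapMatrix (g ^ c) := (map_pow φ.mapMatrix g c).symm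
    rw [hgc] at this
    simpa [RingHom.mapMatrix_apply] using this
  have hdetM : M.det = 1 := sp_det_eq_one M hMsp
  set p := M.charpoly with hp
  have hmono : p.Monic := M.charpoly_monic
  have hcard : Fintype.card (Fin 2 ⊕ Fin 2) = 4 := by simp
  have hdeg : p.natDegree = 4 := by rw [hp, M.charpoly_natDegree_eq_dim, hcard]
  have hpal : p.reverse = p := sp_charpoly_palindrome M hMsp hdetM
  have h13 : p.coeff 1 = p.coeff 3 := by
    conv_lhs => rw [← hpal]
    rw [Polynomial.coeff_reverse, hdeg, Polynomial.revAt_le (by norm_num)]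
  have h0 : p.coeff 0 = 1 := by
    conv_lhs => rw [← hpal]
    rw [Polynomial.coeff_reverse, hdeg, Polynomial.revAt_le (by norm_num)]
    simpa [hdeg] using hmono.coeff_natDegree
  obtain ⟨a, b, ha0, hb0, hra, hrb, hsum⟩ := quartic_pal_factor p hmono hdeg h0 h13
  have htr : Matrix.trace M = a + a⁻¹ + b + b⁻¹ := by
    rw [Matrix.trace_eq_neg_charpoly_coeff, hcard, ← hp, hsum]
  have hac : a ^ c = 1 := charpoly_root_pow_eq_one M hMc hra
  have hbc : b ^ c = 1 := charpoly_root_pow_eq_one M hMc hrb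
  obtain ⟨η, hη1, hηcyc, hηall⟩ := exists_eta (K := K) hc
  obtain ⟨ma, hma⟩ := hηall a hac
  obtain ⟨mb, hmb⟩ := hηall b hbc
  set i : ZMod c := (ma : ZMod c) with hi
  set j : ZMod c := (mb : ZMod c) with hj
  have hmod : ∀ m : ℕ, η ^ m = η ^ (m % c) := by
    intro m
    conv_lhs => rw [← Nat.div_add_mod m c]
    rw [pow_add, pow_mul, hη1, one_pow, one_mul]
  have hai : a = η ^ i.val := by rw [hma, hmod ma, hi, ZMod.val_natCast]
  have hbj : b = η ^ j.val := by rw [hmb, hmod mb, hj, ZMod.val_natCast]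
  have hainv : a⁻¹ = η ^ (c - i.val) := by
    refine inv_eq_of_mul_eq_one_right ?_
    rw [hai, ← pow_add, Nat.add_sub_cancel' (ZMod.val_lt i).le, hη1]
  have hbinv : b⁻¹ = η ^ (c - j.val) := by
    refine inv_eq_of_mul_eq_one_right ?_
    rw [hbj, ← pow_add, Nat.add_sub_cancel' (ZMod.val_lt j).le, hη1]
  have hkey := key_eval hc Θ hdvd η hη1 hηcyc i j
  have htrM : Matrix.trace M = φ (Matrix.trace g) := by
    simp [Matrix.trace, Matrix.diag, hM, map_sum, Matrix.map_apply]
  apply φ.injective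
  rw [map_zero]
  have : φ (Polynomial.aeval (Matrix.trace g) Θ) = Polynomial.aeval (φ (Matrix.trace g)) Θ := by
    rw [show φ (Polynomial.aeval (Matrix.trace g) Θ)
        = φ.toIntAlgHom (Polynomial.aeval (Matrix.trace g) Θ) from rfl,
      ← Polynomial.aeval_algHom_apply φ.toIntAlgHom]
    rfl
  rw [this, ← htrM, htr, hainv, hbinv, hai, hbj]
  exact hkey
end

section
/- (Procesi identity for 4×4 matrices, n+1 = 5 factors) Let R be a commutative ring and Z₁,…,Z₅ ∈ M₄(R). For σ ∈ Sym₅ with disjoint cycle decomposition σ = (σ₁…σ_{r₁})···(σ_{r_i}…σ₅) (including fixed points as 1-cycles), set tr_σ(Z₁,…,Z₅) = tr(Z_{σ₁}···Z_{σ_{r₁}})···tr(Z_{σ_{r_i}}···Z_{σ₅}). Then Σ_{σ ∈ Sym₅} sgn(σ)·tr_σ(Z₁,…,Z₅) = 0. -/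
open Finset in
/-- The fundamental trace identity of Procesi for 4×4 matrices and 5 factors:
`∑_{σ ∈ Sym₅} sgn(σ) tr_σ(Z₁,…,Z₅) = 0`, where for a permutation `σ` with
cycle decomposition `(σ₁…σ_{r₁})⋯(σ_{r_i}…σ₅)` one sets
`tr_σ(Z₁,…,Z₅) = tr(Z_{σ₁}⋯Z_{σ_{r₁}})⋯tr(Z_{σ_{r_i}}⋯Z_{σ₅})`.
Here `tr_σ` is expressed by its closed formula
`tr_σ(Z) = ∑_{f : Fin 5 → Fin 4} ∏ i, (Z i) (f i) (f (σ i))`, which equals the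
product over the cycles of `σ` of the traces of the products along each
cycle. -/
theorem stmt_14 {R : Type*} [CommRing R] (Z : Fin 5 → Matrix (Fin 4) (Fin 4) R) :
    ∑ σ : Equiv.Perm (Fin 5), (Equiv.Perm.sign σ : ℤ) •
      ∑ f : Fin 5 → Fin 4, ∏ i : Fin 5, Z i (f i) (f (σ i)) = 0 := by
  simp_rw [Finset.smul_sum]
  rw [Finset.sum_comm]
  apply Finset.sum_eq_zero
  intro f _
  obtain ⟨i, j, hij, hfij⟩ := Fintype.exists_ne_map_eq_of_card_lt f (by norm_num)
  have hf : ∀ x, f (Equiv.swap i j x) = f x := by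
    intro x
    rcases eq_or_ne x i with rfl | hxi
    · simp [hfij]
    rcases eq_or_ne x j with rfl | hxj
    · simp [hfij]
    · rw [Equiv.swap_apply_of_ne_of_ne hxi hxj]
  apply Finset.sum_involution (fun σ _ => Equiv.swap i j * σ)
  · intro σ _
    have hsgn : Equiv.Perm.sign (Equiv.swap i j * σ) = - Equiv.Perm.sign σ := by
      rw [Equiv.Perm.sign_mul, Equiv.Perm.sign_swap hij, neg_one_mul]
    have hprod : ∏ k : Fin 5, Z k (f k) (f ((Equiv.swap i j * σ) k))
        = ∏ k : Fin 5, Z k (f k) (f (σ k)) := by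
      refine Finset.prod_congr rfl fun k _ => ?_
      rw [Equiv.Perm.mul_apply, hf]
    rw [hsgn, hprod]
    push_cast
    rw [neg_smul, add_neg_cancel]
  · intro σ _ _ h
    exact hij (Equiv.swap_eq_one_iff.mp (mul_eq_right.mp h))
  · intro σ _; exact Finset.mem_univ _
  · intro σ _
    rw [← mul_assoc, Equiv.swap_mul_self, one_mul]
end

section
/- Let F be an algebraically closed field, V a 4-dimensional F-vector space, and g₁, g₂ ∈ GL(V) with ⟨g₁,g₂⟩ acting irreducibly on V. Suppose g₁ has minimal polynomial of degree 3 dividing T³−1, and W ≤ V is a 2-dimensional eigenspace of g₂. If there exists a nonzero v ∈ W with g₁²v ∈ ⟨v, g₁v⟩, then U = ⟨v, g₁v⟩ is 2-dimensional, g₁-invariant, and the vectors v, g₁v, g₂g₁v are linearly independent. -/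
open Polynomial

/-- Let `V` be a 4-dimensional space over an algebraically closed field,
`g₁, g₂ ∈ GL(V)` acting irreducibly, with `g₁` of minimal polynomial of degree
3 dividing `T³ − 1`, and `W` a 2-dimensional eigenspace of `g₂`.  If some
nonzero `v ∈ W` satisfies `g₁²v ∈ ⟨v, g₁v⟩`, then `U = ⟨v, g₁v⟩` is
2-dimensional and `g₁`-invariant, and `v, g₁v, g₂g₁v` are linearly
independent. -/
theorem stmt_18 {F V : Type*} [Field F] [IsAlgClosed F] [AddCommGroup V]
    [Module F V] (hdim : Module.finrank F V = 4) (g₁ g₂ : V ≃ₗ[F] V)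
    (hirr : ∀ W : Submodule F V,
      (∀ x ∈ W, g₁ x ∈ W) → (∀ x ∈ W, g₂ x ∈ W) → W = ⊥ ∨ W = ⊤)
    (hmin : (minpoly F (g₁ : Module.End F V)).natDegree = 3)
    (hmindvd : minpoly F (g₁ : Module.End F V) ∣ X ^ 3 - 1)
    (μ : F) (W : Submodule F V)
    (hW : W = Module.End.eigenspace (g₂ : Module.End F V) μ)
    (hWdim : Module.finrank F W = 2)
    (v : V) (hv : v ∈ W) (hv0 : v ≠ 0)
    (hdep : g₁ (g₁ v) ∈ Submodule.span F {v, g₁ v}) :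
    Module.finrank F (Submodule.span F {v, g₁ v}) = 2 ∧
      (∀ x ∈ Submodule.span F {v, g₁ v}, g₁ x ∈ Submodule.span F {v, g₁ v}) ∧
      LinearIndependent F ![v, g₁ v, g₂ (g₁ v)] := by
  have hg₂v : g₂ v = μ • v := by
    rw [hW, Module.End.mem_eigenspace_iff] at hv; exact hv
  set U : Submodule F V := Submodule.span F {v, g₁ v} with hU
  have hvU : v ∈ U := Submodule.subset_span (by simp)
  have hg₁vU : g₁ v ∈ U := Submodule.subset_span (by simp)
  -- g₁-invariance
  have hinv : ∀ x ∈ U, g₁ x ∈ U := by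
    intro x hx
    have : U.map (g₁ : V →ₗ[F] V) ≤ U := by
      rw [hU, Submodule.map_span, Set.image_pair]
      exact Submodule.span_le.2 (by
        rintro y (rfl | rfl)
        · exact hg₁vU
        · exact hdep)
    exact this ⟨x, hx, rfl⟩
  -- v, g₁ v independent
  have hnot : g₁ v ∉ Submodule.span F {v} := by
    intro h
    rcases Submodule.mem_span_singleton.1 h with ⟨c, hc⟩
    have h1 : ∀ x ∈ Submodule.span F {v}, g₁ x ∈ Submodule.span F {v} := by
      intro x hx
      rcases Submodule.mem_span_singleton.1 hx with ⟨a, rfl⟩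
      rw [map_smul]
      exact Submodule.smul_mem _ a (Submodule.mem_span_singleton.2 ⟨c, hc⟩)
    have h2 : ∀ x ∈ Submodule.span F {v}, g₂ x ∈ Submodule.span F {v} := by
      intro x hx
      rcases Submodule.mem_span_singleton.1 hx with ⟨a, rfl⟩
      rw [map_smul, hg₂v]
      exact Submodule.smul_mem _ a (Submodule.smul_mem _ μ (Submodule.mem_span_singleton_self v))
    rcases hirr _ h1 h2 with h | h
    · have : v ∈ Submodule.span F {v} := Submodule.subset_span (Set.mem_singleton v)
      rw [h] at this
      exact hv0 (by simpa using this)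
    · have := finrank_span_singleton (K := F) hv0
      rw [h, finrank_top, hdim] at this
      omega
  have hli2 : LinearIndependent F ![v, g₁ v] := by
    rw [LinearIndependent.pair_iff' hv0]
    intro a ha
    exact hnot (ha ▸ Submodule.mem_span_singleton.2 ⟨a, rfl⟩)
  have hrange2 : Set.range ![v, g₁ v] = {v, g₁ v} := by
    ext x
    simp only [Set.mem_range, Fin.exists_fin_two, Matrix.cons_val_zero, Matrix.cons_val_one,
      Matrix.head_cons, Set.mem_insert_iff, Set.mem_singleton_iff, eq_comm]
  have hfr : Module.finrank F U = 2 := by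
    rw [hU, ← hrange2, finrank_span_eq_card hli2, Fintype.card_fin]
  refine ⟨hfr, hinv, ?_⟩
  have hnot3 : g₂ (g₁ v) ∉ U := by
    intro h
    have h2 : ∀ x ∈ U, g₂ x ∈ U := by
      intro x hx
      have : U.map (g₂ : V →ₗ[F] V) ≤ U := by
        rw [hU, Submodule.map_span, Set.image_pair]
        exact Submodule.span_le.2 (by
          rintro y (rfl | rfl)
          · show g₂ v ∈ U
            rw [hg₂v]; exact Submodule.smul_mem _ μ hvU
          · exact h)
      exact this ⟨x, hx, rfl⟩
    rcases hirr U hinv h2 with h' | h'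
    · have := hvU; rw [h'] at this
      exact hv0 (by simpa using this)
    · rw [h', finrank_top, hdim] at hfr; omega
  have hsnoc : ![v, g₁ v, g₂ (g₁ v)] = Fin.snoc ![v, g₁ v] (g₂ (g₁ v)) := by
    funext i
    fin_cases i <;> rfl
  rw [hsnoc, linearIndependent_fin_snoc]
  exact ⟨hli2, by rwa [hrange2]⟩
end
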